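/- arXiv:math/0010083 — 13 statements merged into one kernel-verified Lean document; each statement's English description precedes it below -/
import Mathlib

section
/- Let (X,d) be a locally compact metric space and F a set of isometries of X. Then the set K(F) = {x ∈ X : the orbit F(x) = {f x : f ∈ F} has compact closure} is open in X. -/
open Function Set Metric Topology

/-
The closure of the orbit of `x` is compact, so by local compactness it has a compact
neighbourhood, which contains a whole `δ`-thickening of the orbit. Since the maps are
isometries, the orbit of any `y` with `dist x y < δ` stays within `δ` of the orbit of `x`,
hence inside that compact neighbourhood.
-/

theorem exists_pos_isCompact_closure_of_subset_cthickening {X : Type*} [PseudoMetricSpace X]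
    [LocallyCompactSpace X] {s : Set X} (hs : IsCompact (closure s)) :
    ∃ δ > 0, ∀ t ⊆ cthickening δ s, IsCompact (closure t) := by
  obtain ⟨K, hK, hsK⟩ := exists_compact_superset hs
  obtain ⟨δ, hδ, hthick⟩ := hs.exists_cthickening_subset_open isOpen_interior hsK
  refine ⟨δ, hδ, fun t ht => hK.of_isClosed_subset isClosed_closure ?_⟩
  calc closure t ⊆ cthickening δ s := closure_minimal ht isClosed_cthickening
    _ = cthickening δ (closure s) := cthickening_closure.symm
    _ ⊆ K := hthick.trans interior_subset

theorem image_eval_subset_cthickening_of_isometry {X : Type*} [PseudoMetricSpace X]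
    {F : Set (X → X)} (hF : ∀ f ∈ F, Isometry f) (x y : X) :
    (fun f => f y) '' F ⊆ cthickening (dist y x) ((fun f => f x) '' F) := by
  rintro _ ⟨f, hf, rfl⟩
  exact mem_cthickening_of_dist_le _ (f x) _ _ ⟨f, hf, rfl⟩ ((hF f hf).dist_eq y x).le

theorem stmt_0 {X : Type*} [MetricSpace X] [LocallyCompactSpace X]
    (F : Set (X → X)) (hF : ∀ f ∈ F, Isometry f ∧ Surjective f) :
    IsOpen {x : X | IsCompact (closure ((fun f => f x) '' F))} := by
  refine Metric.isOpen_iff.2 fun x hx => ?_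
  obtain ⟨δ, hδ, hcompact⟩ := exists_pos_isCompact_closure_of_subset_cthickening hx
  refine ⟨δ, hδ, fun y hy => hcompact _ ?_⟩
  exact (image_eval_subset_cthickening_of_isometry (fun f hf => (hF f hf).1) x y).trans
    (cthickening_mono (mem_ball.1 hy).le _)
end

section
/- Let (X,d) be a locally compact metric space and F a set of isometries of X. Then the set K(F) = {x ∈ X : the orbit F(x) has compact closure} is closed in X. -/
open Function Set Metric Topology

theorem stmt_1 {X : Type*} [MetricSpace X] [LocallyCompactSpace X]
    (F : Set (X → X)) (hF : ∀ f ∈ F, Isometry f ∧ Surjective f) :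
    IsClosed {x : X | IsCompact (closure ((fun f => f x) '' F))} := by
  apply isClosed_of_closure_subset
  intro x hx
  obtain ⟨r, hr, hcomp⟩ := exists_isCompact_closedBall x
  obtain ⟨y, hy, hxy⟩ := Metric.mem_closure_iff.1 hx (r/4) (by positivity)
  set C := closure ((fun f => f y) '' F) with hC
  have hCc : IsCompact C := hy
  -- closedBall y (3r/4) is compact
  have hby : IsCompact (closedBall y (3*r/4)) := by
    apply hcomp.of_isClosed_subset isClosed_closedBall
    intro z hz
    simp only [mem_closedBall] at hz ⊢
    have := dist_comm x y ▸ hxy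
    calc dist z x ≤ dist z y + dist y x := dist_triangle _ _ _
      _ ≤ 3*r/4 + r/4 := by linarith [dist_comm y x ▸ hxy]
      _ = r := by ring
  -- closedBall (f y) (3r/4) is compact for f ∈ F
  have hfb : ∀ f ∈ F, IsCompact (closedBall (f y) (3*r/4)) := by
    intro f hf
    obtain ⟨hiso, hsurj⟩ := hF f hf
    have himg : f '' closedBall y (3*r/4) = closedBall (f y) (3*r/4) := by
      apply Subset.antisymm
      · rintro _ ⟨w, hw, rfl⟩
        simpa [mem_closedBall, hiso.dist_eq] using hw
      · intro z hz
        obtain ⟨w, rfl⟩ := hsurj z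
        exact ⟨w, by simpa [mem_closedBall, hiso.dist_eq] using hz, rfl⟩
    rw [← himg]
    exact hby.image hiso.continuous
  -- every point of C has a compact r/2 ball
  have hc : ∀ c ∈ C, IsCompact (closedBall c (r/2)) := by
    intro c hcC
    obtain ⟨z, hz, hzc⟩ := Metric.mem_closure_iff.1 hcC (r/4) (by positivity)
    obtain ⟨f, hf, rfl⟩ := hz
    apply (hfb f hf).of_isClosed_subset isClosed_closedBall
    intro w hw
    simp only [mem_closedBall] at hw ⊢
    calc dist w (f y) ≤ dist w c + dist c (f y) := dist_triangle _ _ _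
      _ ≤ r/2 + r/4 := by linarith
      _ = 3*r/4 := by ring
  -- finite cover of C by r/4-balls centered in C
  obtain ⟨t, htC, htfin, hcover⟩ := hCc.finite_cover_balls (e := r/4) (by positivity)
  have hK : IsCompact (⋃ c ∈ t, closedBall c (r/2)) :=
    htfin.isCompact_biUnion (fun c hct => hc c (htC hct))
  have horb : ((fun f => f x) '' F) ⊆ ⋃ c ∈ t, closedBall c (r/2) := by
    rintro _ ⟨f, hf, rfl⟩
    have h1 : f y ∈ C := subset_closure ⟨f, hf, rfl⟩
    have h2 := hcover h1
    simp only [mem_iUnion] at h2 ⊢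
    obtain ⟨c, hct, hcball⟩ := h2
    refine ⟨c, hct, ?_⟩
    simp only [mem_ball] at hcball
    simp only [mem_closedBall]
    have hd : dist (f x) (f y) = dist x y := (hF f hf).1.dist_eq x y
    calc dist (f x) c ≤ dist (f x) (f y) + dist (f y) c := dist_triangle _ _ _
      _ ≤ r/4 + r/4 := by rw [hd]; linarith
      _ = r/2 := by ring
  exact hK.of_isClosed_subset isClosed_closure (closure_minimal horb hK.isClosed)
end

section
/- Let (X,d) be a locally compact metric space and F a set of isometries of X. If x ∈ K(F) (the F-orbit of x is relatively compact) then every point of the connected component of x in X lies in K(F). -/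
open Function Set Metric Topology

private lemma orbit_step {X : Type*} [MetricSpace X]
    (F : Set (X → X)) (hF : ∀ f ∈ F, Isometry f ∧ Surjective f)
    {y z : X} {r : ℝ} (hr : 0 < r)
    (hball : IsCompact (closedBall y (3 * r))) (hdist : dist y z < r)
    (hz : IsCompact (closure ((fun f => f z) '' F))) :
    IsCompact (closure ((fun f => f y) '' F)) := by
  set C := closure ((fun f => f z) '' F) with hC
  -- closedBall z (2r) is compact
  have hzball : IsCompact (closedBall z (2 * r)) := by
    apply hball.of_isClosed_subset isClosed_closedBall
    intro w hw
    simp only [mem_closedBall] at hw ⊢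
    have := dist_triangle w z y
    have hzy : dist z y < r := by rwa [dist_comm]
    linarith
  -- every point of the orbit of z has compact closed ball of radius 2r
  have horb : ∀ f ∈ F, IsCompact (closedBall (f z) (2 * r)) := by
    intro f hf
    obtain ⟨hiso, hsurj⟩ := hF f hf
    have himg : f '' closedBall z (2 * r) = closedBall (f z) (2 * r) := by
      apply Subset.antisymm
      · rintro _ ⟨u, hu, rfl⟩
        simpa [hiso.dist_eq] using hu
      · intro w hw
        obtain ⟨u, rfl⟩ := hsurj w
        exact ⟨u, by simpa [hiso.dist_eq] using hw, rfl⟩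
    rw [← himg]
    exact hzball.image hiso.continuous
  -- every point of C has compact closed ball of radius r
  have hCball : ∀ c ∈ C, IsCompact (closedBall c r) := by
    intro c hc
    rw [hC, Metric.mem_closure_iff] at hc
    obtain ⟨p, hp, hcp⟩ := hc r hr
    obtain ⟨f, hf, rfl⟩ := hp
    apply (horb f hf).of_isClosed_subset isClosed_closedBall
    intro w hw
    simp only [mem_closedBall] at hw ⊢
    have := dist_triangle w c (f z)
    linarith
  -- cover C by finitely many balls of radius ε
  set ε := r - dist y z with hε
  have hεpos : 0 < ε := by simp [hε]; linarith
  obtain ⟨t, hcover⟩ :=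
    hz.elim_nhds_subcover' (fun c _ => ball c ε) (fun c _ => ball_mem_nhds c hεpos)
  -- the union of r-closed-balls around cover centers is compact
  have hScomp : IsCompact (⋃ c ∈ t, closedBall (c : X) r) := by
    apply t.finite_toSet.isCompact_biUnion
    intro c hc
    exact hCball c c.2
  -- orbit of y is contained in that union
  apply hScomp.of_isClosed_subset isClosed_closure
  apply closure_minimal _ (t.finite_toSet.isClosed_biUnion fun c _ => isClosed_closedBall)
  rintro _ ⟨f, hf, rfl⟩
  have hfz : f z ∈ C := subset_closure ⟨f, hf, rfl⟩
  obtain ⟨c, hct, hfzc⟩ := mem_iUnion₂.1 (hcover hfz)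
  refine mem_iUnion₂.2 ⟨c, hct, ?_⟩
  have h1 : dist (f y) (f z) = dist y z := (hF f hf).1.dist_eq y z
  have h2 : dist (f z) (c : X) < ε := mem_ball.1 hfzc
  simp only [mem_closedBall]
  have := dist_triangle (f y) (f z) (c : X)
  linarith

theorem stmt_2 {X : Type*} [MetricSpace X] [LocallyCompactSpace X]
    (F : Set (X → X)) (hF : ∀ f ∈ F, Isometry f ∧ Surjective f)
    (x : X) (hx : IsCompact (closure ((fun f => f x) '' F))) :
    ∀ y ∈ connectedComponent x, IsCompact (closure ((fun f => f y) '' F)) := by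
  set K := {y : X | IsCompact (closure ((fun f => f y) '' F))} with hK
  have hclopen : IsClopen K := by
    constructor
    · -- closed
      rw [← closure_subset_iff_isClosed]
      intro y hy
      obtain ⟨s, hs, hsc⟩ := exists_isCompact_closedBall y
      rw [Metric.mem_closure_iff] at hy
      obtain ⟨z, hzK, hyz⟩ := hy (s / 3) (by positivity)
      have h3 : (3 : ℝ) * (s / 3) = s := by ring
      exact orbit_step F hF (by positivity) (by rwa [h3]) hyz hzK
    · -- open
      rw [Metric.isOpen_iff]
      intro z hz
      obtain ⟨s, hs, hsc⟩ := exists_isCompact_closedBall z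
      refine ⟨s / 6, by positivity, ?_⟩
      intro y hy
      rw [mem_ball] at hy
      have hball : IsCompact (closedBall y (3 * (s / 6))) := by
        apply hsc.of_isClosed_subset isClosed_closedBall
        intro w hw
        simp only [mem_closedBall] at hw ⊢
        have := dist_triangle w y z
        linarith
      exact orbit_step F hF (by positivity) hball hy hz
  intro y hy
  exact hclopen.connectedComponent_subset hx hy
end

section
/- Let (X,d) be a locally compact metric space whose space of connected components Σ(X) (with the quotient topology) is compact. Then there exist finitely many points x₁,…,x_m ∈ X and relatively compact open neighborhoods V_i of x_i such that the set F = {g ∈ I(X,d) : g x_i ∈ V_i for all i} has the property that F(x) is relatively compact for every x ∈ X. -/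
open Function Set Metric Topology

/-!
Call `y` and `z` adjacent when `dist y z < r` for some `r` such that the closed `r`-balls around
both points are compact. If `F` is a set of isometries of `X` onto itself and the orbit `F y` is
relatively compact, then so is `F z` for every `z` adjacent to `y`: finitely many balls
`ball (g y) (r - dist y z)` with `g ∈ F` cover the closure of `F y`, so `F z` lies in the union of
the compact balls `closedBall (g y) r`. Hence relative compactness of orbits propagates along chains
of adjacent points. By local compactness every point is adjacent to all points near it, so the
chain classes are clopen, hence unions of connected components, and compactness of `Σ(X)`
leaves only finitely many of them. Taking one point `xᵢ` of each class and for `Vᵢ` a ball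
around it with compact closure makes the orbits of the `xᵢ`, hence all orbits, relatively
compact.
-/

theorem isClopen_setOf_eqvGen {X : Type*} [TopologicalSpace X] {R : X → X → Prop}
    (hR : ∀ y, ∀ᶠ z in 𝓝 y, R y z) (x : X) : IsClopen {y | Relation.EqvGen R x y} := by
  refine ⟨isOpen_compl_iff.1 <| isOpen_iff_mem_nhds.2 fun y hy => ?_,
    isOpen_iff_mem_nhds.2 fun y hy => ?_⟩
  · filter_upwards [hR y] with z hyz hxz
    exact hy (hxz.trans _ _ _ (.symm _ _ (.rel _ _ hyz)))
  · filter_upwards [hR y] with z hyz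
    exact hy.trans _ _ _ (.rel _ _ hyz)

theorem ConnectedComponents.exists_finite_biUnion_eq_univ_of_isClopen {X : Type*}
    [TopologicalSpace X] [CompactSpace (ConnectedComponents X)] {U : X → Set X}
    (hU : ∀ x, IsClopen (U x)) (hmem : ∀ x, x ∈ U x) :
    ∃ s : Set X, s.Finite ∧ ⋃ x ∈ s, U x = univ := by
  have hsat : ∀ x, ConnectedComponents.mk ⁻¹' (ConnectedComponents.mk '' U x) = U x :=
    fun x => by
    rw [connectedComponents_preimage_image, (hU x).biUnion_connectedComponent_eq]
  have hopen : ∀ x, IsOpen (ConnectedComponents.mk '' U x) := fun x => by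
    rw [← ConnectedComponents.isQuotientMap_coe.isOpen_preimage, hsat]
    exact (hU x).isOpen
  have hcover : univ ⊆ ⋃ x ∈ univ, ConnectedComponents.mk '' U x := fun c _ => by
    obtain ⟨x, rfl⟩ := ConnectedComponents.surjective_coe c
    exact mem_biUnion (mem_univ x) (mem_image_of_mem _ (hmem x))
  obtain ⟨s, -, hs, hsc⟩ :=
    isCompact_univ.elim_finite_subcover_image (fun x _ => hopen x) hcover
  refine ⟨s, hs, eq_univ_of_forall fun y => ?_⟩
  obtain ⟨x, hx, hy⟩ := mem_iUnion₂.1 (hsc (mem_univ (ConnectedComponents.mk y)))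
  exact mem_biUnion hx (hsat x ▸ hy : y ∈ U x)

theorem Isometry.isCompact_closedBall_apply {X Y : Type*} [PseudoMetricSpace X]
    [PseudoMetricSpace Y] {g : X → Y} (hg : Isometry g) (hs : Surjective g) {x : X} {r : ℝ}
    (h : IsCompact (closedBall x r)) : IsCompact (closedBall (g x) r) := by
  rw [← image_preimage_eq (closedBall (g x) r) hs, hg.preimage_closedBall]
  exact h.image hg.continuous

section Orbits

variable {X : Type*} [MetricSpace X]

def CompactBallAdj (x y : X) : Prop :=
  ∃ r, dist x y < r ∧ IsCompact (closedBall x r) ∧ IsCompact (closedBall y r)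

theorem eventually_compactBallAdj [WeaklyLocallyCompactSpace X] (x : X) :
    ∀ᶠ y in 𝓝 x, CompactBallAdj x y := by
  obtain ⟨r, hr, hcpt⟩ := exists_isCompact_closedBall x
  filter_upwards [ball_mem_nhds x (half_pos hr)] with y hy
  rw [mem_ball'] at hy
  refine ⟨r / 2, hy, hcpt.of_isClosed_subset isClosed_closedBall ?_,
    hcpt.of_isClosed_subset isClosed_closedBall ?_⟩
  · exact closedBall_subset_closedBall (by linarith)
  · exact closedBall_subset_closedBall' (by rw [dist_comm]; linarith)

theorem isCompact_closure_image_apply_of_dist_lt {F : Set (X → X)}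
    (hF : ∀ g ∈ F, Isometry g ∧ Surjective g) {y z : X} {r : ℝ}
    (hr : IsCompact (closedBall y r)) (hyz : dist y z < r)
    (hy : IsCompact (closure ((fun g => g y) '' F))) :
    IsCompact (closure ((fun g => g z) '' F)) := by
  have hδ : 0 < r - dist y z := sub_pos.2 hyz
  have hcover : closure ((fun g => g y) '' F) ⊆ ⋃ g ∈ F, ball (g y) (r - dist y z) := by
    intro w hw
    obtain ⟨_, ⟨g, hg, rfl⟩, hwg⟩ := mem_closure_iff.1 hw _ hδ
    exact mem_biUnion hg hwg
  obtain ⟨t, htF, ht, htcover⟩ := hy.elim_finite_subcover_image (fun _ _ => isOpen_ball) hcover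
  have hC : IsCompact (⋃ g ∈ t, closedBall (g y) r) := ht.isCompact_biUnion fun g hg =>
    (hF g (htF hg)).1.isCompact_closedBall_apply (hF g (htF hg)).2 hr
  refine hC.of_isClosed_subset isClosed_closure (closure_minimal ?_ hC.isClosed)
  rintro _ ⟨g, hg, rfl⟩
  obtain ⟨g', hg't, hgg'⟩ := mem_iUnion₂.1 (htcover (subset_closure (mem_image_of_mem _ hg)))
  refine mem_biUnion hg't (mem_closedBall.2 ?_)
  rw [mem_ball] at hgg'
  calc dist (g z) (g' y) ≤ dist (g z) (g y) + dist (g y) (g' y) := dist_triangle _ _ _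
    _ ≤ r := by rw [(hF g hg).1.dist_eq, dist_comm]; linarith

theorem isCompact_closure_image_apply_iff_of_eqvGen {F : Set (X → X)}
    (hF : ∀ g ∈ F, Isometry g ∧ Surjective g) {y z : X}
    (h : Relation.EqvGen CompactBallAdj y z) :
    IsCompact (closure ((fun g => g y) '' F)) ↔ IsCompact (closure ((fun g => g z) '' F)) := by
  induction h with
  | rel a b hab =>
    obtain ⟨r, hd, ha, hb⟩ := hab
    exact ⟨isCompact_closure_image_apply_of_dist_lt hF ha hd,
      isCompact_closure_image_apply_of_dist_lt hF hb (dist_comm a b ▸ hd)⟩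
  | refl => exact Iff.rfl
  | symm _ _ _ ih => exact ih.symm
  | trans _ _ _ _ _ ih₁ ih₂ => exact ih₁.trans ih₂

end Orbits

theorem stmt_3 {X : Type*} [MetricSpace X] [LocallyCompactSpace X]
    [CompactSpace (ConnectedComponents X)] :
    ∃ (m : ℕ) (x : Fin m → X) (V : Fin m → Set X),
      (∀ i, IsOpen (V i) ∧ x i ∈ V i ∧ IsCompact (closure (V i))) ∧
      ∀ y : X, IsCompact (closure
        ((fun g => g y) ''
          {g : X → X | (Isometry g ∧ Surjective g) ∧ ∀ i, g (x i) ∈ V i})) := by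
  obtain ⟨s, hs, hcover⟩ := ConnectedComponents.exists_finite_biUnion_eq_univ_of_isClopen
    (isClopen_setOf_eqvGen eventually_compactBallAdj)
    (Relation.EqvGen.refl (r := @CompactBallAdj X _))
  obtain ⟨m, x, -, rfl⟩ := hs.fin_param
  choose r hr hrc using fun i => exists_isCompact_closedBall (x i)
  refine ⟨m, x, fun i => ball (x i) (r i), fun i => ⟨isOpen_ball, mem_ball_self (hr i),
    (hrc i).of_isClosed_subset isClosed_closure closure_ball_subset_closedBall⟩, fun y => ?_⟩
  obtain ⟨i, hi⟩ : ∃ i, Relation.EqvGen CompactBallAdj (x i) y := by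
    simpa only [biUnion_range, mem_iUnion, mem_ofPred_eq] using hcover.superset (mem_univ y)
  refine (isCompact_closure_image_apply_iff_of_eqvGen (fun g hg => hg.1) hi).1 ?_
  refine (hrc i).of_isClosed_subset isClosed_closure (closure_minimal ?_ isClosed_closedBall)
  rintro _ ⟨g, hg, rfl⟩
  exact ball_subset_closedBall (hg.2 i)
end

section
/- Let (X,d) be a locally compact metric space with compact space of connected components Σ(X), and let (f_n) be a sequence of isometries of X converging pointwise to a continuous map f : X → X. Then the image f(X) is both open and closed in X. -/
open Function Set Metric Topology Filter

set_option maxHeartbeats 1000000 in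
theorem stmt_5 {X : Type*} [MetricSpace X] [LocallyCompactSpace X]
    [CompactSpace (ConnectedComponents X)]
    (fn : ℕ → X → X) (hfn : ∀ n, Isometry (fn n) ∧ Surjective (fn n))
    (f : X → X) (hf : Continuous f)
    (hlim : ∀ x, Tendsto (fun n => fn n x) atTop (nhds (f x))) :
    IsOpen (Set.range f) ∧ IsClosed (Set.range f) := by
  have hiso : ∀ n, Isometry (fn n) := fun n => (hfn n).1
  have hsurj : ∀ n, Surjective (fn n) := fun n => (hfn n).2
  -- package each fn n as an isometry equivalence
  let e : ℕ → X ≃ᵢ X := fun n =>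
    { toEquiv := Equiv.ofBijective (fn n) ⟨(hiso n).injective, hsurj n⟩
      isometry_toFun := hiso n }
  have he : ∀ n x, e n x = fn n x := fun n x => rfl
  have hesymm : ∀ n y, fn n ((e n).symm y) = y := fun n y => (e n).apply_symm_apply y
  -- f is an isometry
  have hfI : Isometry f := by
    apply Isometry.of_dist_eq
    intro x y
    have h1 : Tendsto (fun n => dist (fn n x) (fn n y)) atTop (nhds (dist (f x) (f y))) :=
      (hlim x).dist (hlim y)
    have h2 : (fun n => dist (fn n x) (fn n y)) = fun _ => dist x y :=
      funext fun n => (hiso n).dist_eq x y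
    rw [h2] at h1
    exact (tendsto_nhds_unique h1 tendsto_const_nhds)
  constructor
  · -- openness
    rw [isOpen_iff_mem_nhds]
    rintro _ ⟨x, rfl⟩
    obtain ⟨r, hr, hK⟩ := exists_isCompact_closedBall x
    have hev : ∀ᶠ n in atTop, dist (fn n x) (f x) < r / 2 :=
      (hlim x).eventually (eventually_nhds_iff.2
        ⟨ball (f x) (r / 2), fun z hz => mem_ball.1 hz, isOpen_ball,
          mem_ball_self (by linarith)⟩)
    obtain ⟨N, hN⟩ := eventually_atTop.1 hev
    have hsub : closedBall (f x) (r / 2) ⊆ range f := by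
      intro y hy
      -- preimages of y under fn (N + k)
      set z : ℕ → X := fun k => (e (N + k)).symm y with hz
      have hzK : ∀ k, z k ∈ closedBall x r := by
        intro k
        have h1 : dist (z k) x = dist y (fn (N + k) x) := by
          have := (hiso (N + k)).dist_eq (z k) x
          rw [← this, hesymm]
        rw [mem_closedBall, h1]
        calc dist y (fn (N + k) x) ≤ dist y (f x) + dist (f x) (fn (N + k) x) :=
              dist_triangle _ _ _
          _ ≤ r / 2 + r / 2 := by
              refine add_le_add (mem_closedBall.1 hy) ?_
              rw [dist_comm]
              exact (hN (N + k) (Nat.le_add_right N k)).le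
          _ = r := by ring
      obtain ⟨c, hcK, φ, hφ, hφlim⟩ := hK.tendsto_subseq hzK
      refine ⟨c, ?_⟩
      -- show f c = y
      have key : Tendsto (fun _ : ℕ => dist y (f c)) atTop (nhds 0) := by
        have hb : ∀ k, dist y (f c) ≤ dist (z (φ k)) c + dist (fn (N + φ k) c) (f c) := by
          intro k
          have h1 : y = fn (N + φ k) (z (φ k)) := (hesymm (N + φ k) y).symm
          calc dist y (f c) ≤ dist y (fn (N + φ k) c) + dist (fn (N + φ k) c) (f c) :=
                dist_triangle _ _ _
            _ = dist (z (φ k)) c + dist (fn (N + φ k) c) (f c) := by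
                rw [h1, (hiso (N + φ k)).dist_eq]
        have h2 : Tendsto (fun k => dist (z (φ k)) c) atTop (nhds 0) :=
          tendsto_iff_dist_tendsto_zero.1 hφlim
        have h3 : Tendsto (fun k => dist (fn (N + φ k) c) (f c)) atTop (nhds 0) := by
          have hd : Tendsto (fun m => dist (fn m c) (f c)) atTop (nhds 0) :=
            tendsto_iff_dist_tendsto_zero.1 (hlim c)
          exact hd.comp (tendsto_atTop_mono (fun k => Nat.le_add_left _ _) hφ.tendsto_atTop)
        have := h2.add h3
        rw [add_zero] at this
        have h4 : Tendsto (fun _ : ℕ => dist y (f c)) atTop (nhds (dist y (f c))) :=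
          tendsto_const_nhds
        have hle : dist y (f c) ≤ 0 := le_of_tendsto_of_tendsto' h4 this hb
        have : dist y (f c) = 0 := le_antisymm hle dist_nonneg
        rw [this]
        exact tendsto_const_nhds
      have : dist y (f c) = 0 := tendsto_nhds_unique tendsto_const_nhds key
      exact (dist_eq_zero.1 this).symm
    exact Filter.mem_of_superset (closedBall_mem_nhds (f x) (by linarith)) hsub
  · -- closedness
    rw [← isSeqClosed_iff_isClosed]
    rintro u y hu huy
    choose x hx using hu
    have hfx : Tendsto (fun k => f (x k)) atTop (nhds y) := by
      simpa only [hx] using huy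
    -- x is Cauchy since f is an isometry
    have hxc : CauchySeq x := by
      rw [Metric.cauchySeq_iff]
      have h1 := Metric.cauchySeq_iff.1 hfx.cauchySeq
      intro ε hε
      obtain ⟨N, hN⟩ := h1 ε hε
      exact ⟨N, fun m hm n hn => by rw [← hfI.dist_eq]; exact hN m hm n hn⟩
    obtain ⟨r, hr, hK⟩ := exists_isCompact_closedBall y
    -- pick k0 with dist (f (x k0)) y < r/4 and the Cauchy tail bound
    obtain ⟨K1, hK1⟩ := Metric.cauchySeq_iff'.1 hxc (r / 4) (by linarith)
    obtain ⟨K2, hK2⟩ : ∃ K2, ∀ k ≥ K2, dist (f (x k)) y < r / 4 := by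
      have := (Metric.tendsto_atTop.1 hfx) (r / 4) (by linarith)
      obtain ⟨K2, hK2⟩ := this
      exact ⟨K2, fun k hk => hK2 k hk⟩
    set k0 := max K1 K2 with hk0
    -- pick n with dist (fn n (x k0)) (f (x k0)) < r/4
    obtain ⟨n, hn⟩ : ∃ n, dist (fn n (x k0)) (f (x k0)) < r / 4 := by
      have := (Metric.tendsto_atTop.1 (hlim (x k0))) (r / 4) (by linarith)
      obtain ⟨N, hN⟩ := this
      exact ⟨N, hN N le_rfl⟩
    set z := (e n).symm y with hzdef
    have hzx : dist (x k0) z < r / 2 := by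
      have h1 : dist (x k0) z = dist (fn n (x k0)) y := by
        rw [← (hiso n).dist_eq (x k0) z, hesymm]
      rw [h1]
      calc dist (fn n (x k0)) y ≤ dist (fn n (x k0)) (f (x k0)) + dist (f (x k0)) y :=
            dist_triangle _ _ _
        _ < r / 4 + r / 4 := add_lt_add hn (hK2 k0 (le_max_right _ _))
        _ = r / 2 := by ring
    -- the compact set containing the tail of x
    have hKz : IsCompact (closedBall z r) := by
      have himg : (e n).symm '' closedBall y r = closedBall z r := by
        rw [(e n).symm.image_closedBall]
      rw [← himg]
      exact hK.image (e n).symm.continuous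
    have htail : ∀ k ≥ k0, x k ∈ closedBall z r := by
      intro k hk
      rw [mem_closedBall]
      calc dist (x k) z ≤ dist (x k) (x k0) + dist (x k0) z := dist_triangle _ _ _
        _ ≤ r / 2 + r / 2 := by
            refine add_le_add ?_ hzx.le
            calc dist (x k) (x k0) ≤ dist (x k) (x K1) + dist (x K1) (x k0) :=
                  dist_triangle _ _ _
              _ ≤ r / 4 + r / 4 := by
                  refine add_le_add (hK1 k (le_trans (le_max_left _ _) hk)).le ?_
                  rw [dist_comm]
                  exact (hK1 k0 (le_max_left _ _)).le
              _ = r / 2 := by ring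
        _ ≤ r := by linarith
    -- extract a convergent subsequence of the tail
    set w : ℕ → X := fun j => x (k0 + j) with hw
    have hwK : ∀ j, w j ∈ closedBall z r := fun j => htail (k0 + j) (Nat.le_add_right _ _)
    obtain ⟨c, hcK, φ, hφ, hφlim⟩ := hKz.tendsto_subseq hwK
    have hxc2 : Tendsto x atTop (nhds c) := by
      refine tendsto_nhds_of_cauchySeq_of_subseq hxc (p := atTop)
        (f := fun j : ℕ => k0 + φ j) ?_ ?_
      · exact tendsto_atTop_mono (fun j => Nat.le_add_left _ _) hφ.tendsto_atTop
      · simpa [w, Function.comp_def] using hφlim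
    have : Tendsto (fun k => f (x k)) atTop (nhds (f c)) := (hf.tendsto c).comp hxc2
    have hyc : y = f c := tendsto_nhds_unique hfx this
    exact ⟨c, hyc.symm⟩
end

section
/- Let (X,d) be a locally compact metric space, (f_n) a sequence of isometries of X converging pointwise to a map f, and F = {f_n⁻¹ : n ∈ ℕ}. Then f(X) = K(F), where K(F) is the set of points of X whose F-orbit is relatively compact. -/
/-! An isometry moves `x` as far from `y` as its inverse moves `y` from `x`, so `f_n x → y`
exactly when `f_n⁻¹ y → x`. Hence the inverse orbit of `f x` converges to `x` and is relatively
compact; conversely a relatively compact inverse orbit of `y` has a subsequence converging to some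
`x`, and then `f_{n_k} x → y`, so `y = f x`. -/

open Function Set Metric Topology Filter

theorem IsometryEquiv.dist_apply_eq_dist_symm_apply {α β : Type*} [PseudoMetricSpace α]
    [PseudoMetricSpace β] (e : α ≃ᵢ β) (x : α) (y : β) :
    dist (e x) y = dist (e.symm y) x := by
  rw [← e.dist_eq, e.apply_symm_apply, dist_comm]

theorem IsometryEquiv.tendsto_apply_iff_tendsto_symm_apply {ι α β : Type*} [PseudoMetricSpace α]
    [PseudoMetricSpace β] {l : Filter ι} (e : ι → α ≃ᵢ β) (x : α) (y : β) :
    Tendsto (fun i => e i x) l (𝓝 y) ↔ Tendsto (fun i => (e i).symm y) l (𝓝 x) := by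
  rw [tendsto_iff_dist_tendsto_zero, tendsto_iff_dist_tendsto_zero (f := fun i => (e i).symm y)]
  simp only [fun i => (e i).dist_apply_eq_dist_symm_apply x y]

theorem Filter.Tendsto.isCompact_closure_range {X : Type*} [TopologicalSpace X] [T2Space X]
    {u : ℕ → X} {x : X} (hu : Tendsto u atTop (𝓝 x)) : IsCompact (closure (range u)) :=
  hu.isCompact_insert_range.of_isClosed_subset isClosed_closure
    (closure_minimal (subset_insert _ _) hu.isCompact_insert_range.isClosed)

theorem stmt_6_general {X : Type*} [MetricSpace X]
    (fn : ℕ → X ≃ᵢ X) (f : X → X)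
    (hlim : ∀ x, Tendsto (fun n => fn n x) atTop (nhds (f x))) :
    Set.range f =
      {y : X | IsCompact (closure (Set.range fun n => (fn n).symm y))} := by
  ext y
  constructor
  · rintro ⟨x, rfl⟩
    exact ((IsometryEquiv.tendsto_apply_iff_tendsto_symm_apply fn x (f x)).1
      (hlim x)).isCompact_closure_range
  · intro hK
    obtain ⟨x, -, φ, hφ, hx⟩ :=
      hK.tendsto_subseq fun n => subset_closure (mem_range_self n)
    have hy : Tendsto (fun k => fn (φ k) x) atTop (𝓝 y) :=
      (IsometryEquiv.tendsto_apply_iff_tendsto_symm_apply (fn ∘ φ) x y).2 hx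
    exact ⟨x, tendsto_nhds_unique ((hlim x).comp hφ.tendsto_atTop) hy⟩

theorem stmt_6 {X : Type*} [MetricSpace X] [LocallyCompactSpace X]
    (fn : ℕ → X ≃ᵢ X) (f : X → X)
    (hlim : ∀ x, Tendsto (fun n => fn n x) atTop (nhds (f x))) :
    Set.range f =
      {y : X | IsCompact (closure (Set.range fun n => (fn n).symm y))} :=
  stmt_6_general fn f hlim
end

section
/- Let (X,d) be a locally compact metric space whose space of connected components Σ(X) is compact. Then the group of isometries I(X,d) is a closed subset of C(X,X) with the topology of pointwise convergence; equivalently, every pointwise limit of a sequence of isometries of X is itself a surjective isometry. -/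
open Function Set Metric Topology Filter

namespace Stmt7Aux

variable {X : Type*} [MetricSpace X]

lemma ok_mono {x y : X} {R R' : ℝ} (h : IsCompact (closedBall x R))
    (hle : dist y x + R' ≤ R) : IsCompact (closedBall y R') :=
  h.of_isClosed_subset isClosed_closedBall (closedBall_subset_closedBall' (by linarith))

lemma iso_image_closedBall {h : X → X} (hi : Isometry h) (hs : Surjective h) (x : X) (R : ℝ) :
    h '' closedBall x R = closedBall (h x) R := by
  ext y
  constructor
  · rintro ⟨z, hz, rfl⟩
    simpa [mem_closedBall, hi.dist_eq] using hz
  · intro hy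
    obtain ⟨z, rfl⟩ := hs y
    exact ⟨z, by simpa [mem_closedBall, hi.dist_eq] using hy, rfl⟩

lemma ok_surj_iso {h : X → X} (hi : Isometry h) (hs : Surjective h) {x : X} {R : ℝ}
    (hc : IsCompact (closedBall x R)) : IsCompact (closedBall (h x) R) := by
  rw [← iso_image_closedBall hi hs]
  exact hc.image hi.continuous

theorem key {X : Type*} [MetricSpace X] [LocallyCompactSpace X]
    [CompactSpace (ConnectedComponents X)] {ι : Type*} (U : Ultrafilter ι)
    (F : ι → X → X) (hiso : ∀ i, Isometry (F i)) (hsurj : ∀ i, Surjective (F i))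
    (f : X → X) (hconv : ∀ x, Tendsto (fun i => F i x) (U : Filter ι) (𝓝 (f x))) :
    Isometry f ∧ Surjective f := by
  classical
  -- the inverses of the `F i`
  set g : ι → X → X := fun i => surjInv (hsurj i) with hg
  have hgr : ∀ i y, F i (g i y) = y := fun i y => surjInv_eq (hsurj i) y
  have hgl : ∀ i x, g i (F i x) = x := fun i x => (hiso i).injective (by rw [hgr])
  have hgiso : ∀ i, Isometry (g i) := fun i => Isometry.of_dist_eq (fun y z => by
    rw [← (hiso i).dist_eq (g i y) (g i z), hgr, hgr])
  have hgsurj : ∀ i, Surjective (g i) := fun i y => ⟨F i y, hgl i y⟩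
  -- f is an isometry
  have hfiso : Isometry f := by
    refine Isometry.of_dist_eq (fun x y => ?_)
    have h1 : Tendsto (fun i => dist (F i x) (F i y)) U (𝓝 (dist (f x) (f y))) :=
      (hconv x).dist (hconv y)
    have h2 : (fun i => dist (F i x) (F i y)) = fun _ => dist x y := by
      funext i; exact (hiso i).dist_eq x y
    rw [h2] at h1
    exact tendsto_nhds_unique h1 tendsto_const_nhds
  refine ⟨hfiso, ?_⟩
  -- compactness transfer
  have okx : ∀ x : X, ∃ R, 0 < R ∧ IsCompact (closedBall x R) := fun x =>
    exists_isCompact_closedBall x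
  have okFinv : ∀ i (x : X) R, IsCompact (closedBall (F i x) R) →
      IsCompact (closedBall x R) := by
    intro i x R h
    have := ok_surj_iso (hgiso i) (hgsurj i) h
    rwa [hgl] at this
  have okf_inv : ∀ (a : X) R, IsCompact (closedBall (f a) R) → ∀ R' < R,
      IsCompact (closedBall a R') := by
    intro a R hR R' hR'
    have hev : ∀ᶠ i in (U : Filter ι), dist (F i a) (f a) < R - R' :=
      Metric.tendsto_nhds.1 (hconv a) (R - R') (by linarith)
    obtain ⟨i, hi⟩ := hev.exists
    have h1 : IsCompact (closedBall (F i a) R') :=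
      ok_mono hR (by rw [dist_comm] at hi ⊢; linarith)
    exact okFinv i a R' h1
  have okf_iter_inv : ∀ (m : ℕ) (a : X) R, IsCompact (closedBall (f^[m] a) R) → ∀ R' < R,
      IsCompact (closedBall a R') := by
    intro m
    induction m with
    | zero =>
        intro a R h R' h'
        simp only [Function.iterate_zero, id_eq] at h
        exact ok_mono h (by simp; linarith)
    | succ m ih =>
        intro a R h R' h'
        rw [Function.iterate_succ_apply] at h
        have h2 := ih (f a) R h ((R + R') / 2) (by linarith)
        exact okf_inv a _ h2 R' (by linarith)
  -- limit of `g i (f x)` is `x`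
  have hlim_gf : ∀ x : X, Tendsto (fun i => g i (f x)) U (𝓝 x) := by
    intro x
    rw [tendsto_iff_dist_tendsto_zero]
    have h1 : ∀ i, dist (g i (f x)) x = dist (f x) (F i x) := by
      intro i
      calc dist (g i (f x)) x = dist (g i (f x)) (g i (F i x)) := by rw [hgl]
        _ = dist (f x) (F i x) := (hgiso i).dist_eq _ _
    simp only [h1]
    have h2 : Tendsto (fun i => dist (f x) (F i x)) U (𝓝 (dist (f x) (f x))) :=
      tendsto_const_nhds.dist (hconv x)
    simpa using h2
  -- extraction of limits of `g i u`
  have extract : ∀ (u : X) (K : Set X), IsCompact K →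
      (∀ᶠ i in (U : Filter ι), g i u ∈ K) → u ∈ range f := by
    intro u K hK hev
    have hle : ↑(U.map (fun i => g i u)) ≤ 𝓟 K := by
      rw [Ultrafilter.coe_map, le_principal_iff, mem_map]
      exact hev
    obtain ⟨z, hzK, hz⟩ := hK.ultrafilter_le_nhds (U.map (fun i => g i u)) hle
    rw [Ultrafilter.coe_map] at hz
    have hz' : Tendsto (fun i => g i u) U (𝓝 z) := hz
    refine ⟨z, ?_⟩
    have e1 : ∀ i, dist (F i z) u = dist z (g i u) := by
      intro i
      calc dist (F i z) u = dist (F i z) (F i (g i u)) := by rw [hgr]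
        _ = dist z (g i u) := (hiso i).dist_eq _ _
    have h1 : Tendsto (fun i => dist (F i z) u) U (𝓝 (dist (f z) u)) :=
      (hconv z).dist tendsto_const_nhds
    have h2 : Tendsto (fun i => dist (F i z) u) U (𝓝 0) := by
      simp only [e1]
      have h2' : Tendsto (fun i => dist z (g i u)) U (𝓝 (dist z z)) :=
        Tendsto.dist tendsto_const_nhds hz'
      simpa using h2'
    have : dist (f z) u = 0 := tendsto_nhds_unique h1 h2
    exact (dist_eq_zero.mp this)
  -- `range f` is open
  have hGopen : IsOpen (range f) := by
    rw [Metric.isOpen_iff]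
    rintro u ⟨z, rfl⟩
    obtain ⟨R, hR0, hRc⟩ := okx z
    refine ⟨R / 2, by linarith, ?_⟩
    intro v hv
    rw [mem_ball] at hv
    have hev : ∀ᶠ i in (U : Filter ι), g i v ∈ closedBall z R := by
      have h1 : ∀ᶠ i in (U : Filter ι), dist (g i (f z)) z < R / 2 :=
        Metric.tendsto_nhds.1 (hlim_gf z) (R / 2) (by linarith)
      filter_upwards [h1] with i hi
      have h2 : dist (g i v) (g i (f z)) = dist v (f z) := (hgiso i).dist_eq _ _
      have h3 := dist_triangle (g i v) (g i (f z)) z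
      rw [mem_closedBall]
      rw [h2] at h3
      linarith
    exact extract v _ hRc hev
  -- `range f` is closed
  have hGclosed : IsClosed (range f) := by
    refine isClosed_of_closure_subset ?_
    intro u hu
    obtain ⟨R, hR0, hRc⟩ := okx u
    obtain ⟨v, hvG, hvd⟩ := Metric.mem_closure_iff.mp hu (R / 4) (by linarith)
    obtain ⟨z', rfl⟩ := hvG
    have h1 : IsCompact (closedBall (f z') (3 * R / 4)) :=
      ok_mono hRc (by rw [dist_comm]; linarith)
    have h2 : IsCompact (closedBall z' (R / 2)) := by
      have hev : ∀ᶠ i in (U : Filter ι), dist (g i (f z')) z' < R / 4 :=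
        Metric.tendsto_nhds.1 (hlim_gf z') (R / 4) (by linarith)
      obtain ⟨i, hi⟩ := hev.exists
      have h3 : IsCompact (closedBall (g i (f z')) (3 * R / 4)) :=
        ok_surj_iso (hgiso i) (hgsurj i) h1
      exact ok_mono h3 (by rw [dist_comm]; linarith)
    have hev : ∀ᶠ i in (U : Filter ι), g i u ∈ closedBall z' (R / 2) := by
      have h4 : ∀ᶠ i in (U : Filter ι), dist (g i (f z')) z' < R / 4 :=
        Metric.tendsto_nhds.1 (hlim_gf z') (R / 4) (by linarith)
      filter_upwards [h4] with i hi
      have h5 : dist (g i u) (g i (f z')) = dist u (f z') := (hgiso i).dist_eq _ _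
      have h6 := dist_triangle (g i u) (g i (f z')) z'
      rw [mem_closedBall]
      rw [h5] at h6
      linarith
    exact extract u _ h2 hev
  -- the key inequality: points outside `range f` are far from `f x` at the scale of
  -- compactness radii
  have dagger : ∀ u, u ∉ range f → ∀ (x : X) R, IsCompact (closedBall x R) →
      R ≤ dist u (f x) := by
    intro u hu x R hR
    by_contra hlt
    push_neg at hlt
    apply hu
    have hev : ∀ᶠ i in (U : Filter ι), g i u ∈ closedBall x R := by
      have h1 : ∀ᶠ i in (U : Filter ι), dist (F i x) (f x) < R - dist u (f x) :=
        Metric.tendsto_nhds.1 (hconv x) _ (by linarith)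
      filter_upwards [h1] with i hi
      have e1 : dist (g i u) x = dist u (F i x) := by
        conv_lhs => rw [← hgl i x]
        rw [(hgiso i).dist_eq]
      have h2 := dist_triangle u (f x) (F i x)
      rw [mem_closedBall, e1]
      rw [dist_comm (f x) (F i x)] at h2
      linarith
    exact extract u _ hR hev
  -- iterates of f
  have hfiter_iso : ∀ n : ℕ, Isometry (f^[n]) := by
    intro n
    induction n with
    | zero => simpa using isometry_id
    | succ n ih => rw [Function.iterate_succ'] ; exact hfiso.comp ih
  -- images of clopen sets under f are clopen
  have image_clopen : ∀ A : Set X, IsClopen A → IsClopen (f '' A) := by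
    intro A hA
    rcases isEmpty_or_nonempty X with hX | hX
    · have : f '' A = ∅ := by
        simp [Set.eq_empty_of_isEmpty]
      rw [this]
      exact isClopen_empty
    set φ := Function.invFun f with hφ
    have hlf : ∀ a, φ (f a) = a := fun a => leftInverse_invFun hfiso.injective a
    have himg : f '' A = range f ∩ φ ⁻¹' A := by
      ext u
      constructor
      · rintro ⟨a, ha, rfl⟩
        exact ⟨⟨a, rfl⟩, by rw [mem_preimage, hlf a]; exact ha⟩
      · rintro ⟨⟨a, rfl⟩, hu⟩
        rw [mem_preimage, hlf a] at hu
        exact ⟨a, hu, rfl⟩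
    have hφcont : ContinuousOn φ (range f) := by
      refine LipschitzOnWith.continuousOn (K := 1) ?_
      rintro u ⟨a, rfl⟩ v ⟨b, rfl⟩
      rw [hlf a, hlf b, hfiso.edist_eq a b]
      simp
    constructor
    · rw [himg]
      exact hφcont.preimage_isClosed_of_isClosed hGclosed hA.isClosed
    · rw [himg]
      exact hφcont.isOpen_inter_preimage hGopen hA.isOpen
  -- the iterated ranges are clopen
  have hGn_clopen : ∀ n : ℕ, IsClopen (range (f^[n])) := by
    intro n
    induction n with
    | zero => simpa using isClopen_univ
    | succ n ih =>
        have : range (f^[n+1]) = f '' range (f^[n]) := by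
          rw [Function.iterate_succ']
          exact Set.range_comp f (f^[n])
        rw [this]
        exact image_clopen _ ih
  have hGn_mono : ∀ n : ℕ, range (f^[n+1]) ⊆ range (f^[n]) := by
    rintro n u ⟨x, rfl⟩
    exact ⟨f x, (Function.iterate_succ_apply f n x).symm⟩
  -- the intersection
  set Xinf : Set X := ⋂ n : ℕ, range (f^[n]) with hXinf
  have hXinf_closed : IsClosed Xinf := isClosed_iInter fun n => (hGn_clopen n).isClosed
  -- splitting of points outside Xinf
  have split : ∀ u, u ∉ Xinf → ∃ (n : ℕ) (u₀ : X), u = f^[n] u₀ ∧ u₀ ∉ range f := by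
    intro u hu
    rw [hXinf, mem_iInter] at hu
    push_neg at hu
    have hP : ∃ n, u ∉ range (f^[n]) := hu
    have hN0 : Nat.find hP ≠ 0 := by
      intro h
      have hsp := Nat.find_spec hP
      rw [h] at hsp
      simp at hsp
    obtain ⟨n, hn⟩ := Nat.exists_eq_succ_of_ne_zero hN0
    have hNspec : u ∉ range (f^[n+1]) := by
      have hsp := Nat.find_spec hP
      rw [hn] at hsp
      exact hsp
    have hmem : u ∈ range (f^[n]) := by
      by_contra h
      have hle : Nat.find hP ≤ n := Nat.find_le h
      rw [hn] at hle
      omega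
    obtain ⟨u₀, rfl⟩ := hmem
    refine ⟨n, u₀, rfl, ?_⟩
    rintro ⟨z, rfl⟩
    apply hNspec
    exact ⟨z, (Function.iterate_succ_apply f n z).symm⟩
  -- Xinf is open
  have hXinf_open : IsOpen Xinf := by
    rw [Metric.isOpen_iff]
    intro w hw
    obtain ⟨R, hR0, hRc⟩ := okx w
    refine ⟨R, hR0, ?_⟩
    intro u hu
    rw [mem_ball] at hu
    by_contra hun
    obtain ⟨n, u₀, rfl, hu₀⟩ := split u hun
    have hw' : w ∈ range (f^[n+1]) := by
      rw [hXinf, mem_iInter] at hw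
      exact hw (n+1)
    obtain ⟨v, rfl⟩ := hw'
    have e1 : dist (f^[n] u₀) (f^[n+1] v) = dist u₀ (f v) := by
      rw [Function.iterate_succ_apply]
      exact (hfiter_iso n).dist_eq u₀ (f v)
    rw [e1] at hu
    set R' := (dist u₀ (f v) + R) / 2 with hR'
    have h1 : IsCompact (closedBall v R') := okf_iter_inv (n+1) v R hRc R' (by
      rw [hR']; linarith)
    have h2 := dagger u₀ hu₀ v R' h1
    rw [hR'] at h2
    have h3 : 0 ≤ dist u₀ (f v) := dist_nonneg
    linarith
  have hXinf_clopen : IsClopen Xinf := ⟨hXinf_closed, hXinf_open⟩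
  -- the main argument in the component space
  intro y
  by_contra hy
  have hy' : ∀ z, f z ≠ y := fun z hz => hy ⟨z, hz⟩
  have hynr : (y : X) ∉ range f := fun ⟨z, hz⟩ => hy' z hz
  -- the clopen saturated sets S n
  set S : ℕ → Set X := fun n => range (f^[n]) \ Xinf with hS
  have hS_clopen : ∀ n, IsClopen (S n) := fun n => (hGn_clopen n).diff hXinf_clopen
  have hS_mono : ∀ n, S (n+1) ⊆ S n := fun n => diff_subset_diff_left (hGn_mono n)
  have hS_nonempty : ∀ n, (S n).Nonempty := by
    intro n
    refine ⟨f^[n] y, ⟨y, rfl⟩, ?_⟩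
    intro hmem
    rw [hXinf, mem_iInter] at hmem
    obtain ⟨z, hz⟩ := hmem (n+1)
    rw [Function.iterate_succ_apply] at hz
    exact hy' z ((hfiter_iso n).injective hz)
  -- push to the component space
  set q : X → ConnectedComponents X := ConnectedComponents.mk with hq
  have hsat : ∀ (A : Set X), IsClopen A → q ⁻¹' (q '' A) = A := by
    intro A hA
    ext x
    simp only [mem_preimage, mem_image]
    constructor
    · rintro ⟨a, ha, hax⟩
      have h1 : connectedComponent a = connectedComponent x :=
        ConnectedComponents.coe_eq_coe.mp hax
      have h2 : x ∈ connectedComponent a := h1 ▸ mem_connectedComponent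
      exact hA.connectedComponent_subset ha h2
    · intro hx
      exact ⟨x, hx, rfl⟩
  set T : ℕ → Set (ConnectedComponents X) := fun n => q '' (S n) with hT
  have hT_closed : ∀ n, IsClosed (T n) := by
    intro n
    rw [← ConnectedComponents.isQuotientMap_coe.isClosed_preimage]
    have : (ConnectedComponents.mk) ⁻¹' (T n) = S n := hsat (S n) (hS_clopen n)
    rw [this]
    exact (hS_clopen n).isClosed
  have hT_mono : ∀ n, T (n+1) ⊆ T n := fun n => image_mono (hS_mono n)
  have hT_nonempty : ∀ n, (T n).Nonempty := fun n => (hS_nonempty n).image _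
  have hT_compact : IsCompact (T 0) := (hT_closed 0).isCompact
  have hInter : (⋂ n, T n).Nonempty :=
    IsCompact.nonempty_iInter_of_sequence_nonempty_isCompact_isClosed T hT_mono
      hT_nonempty hT_compact hT_closed
  obtain ⟨c, hc⟩ := hInter
  rw [mem_iInter] at hc
  obtain ⟨x0, hx0, hx0c⟩ := hc 0
  have hx0all : ∀ n, x0 ∈ S n := by
    intro n
    obtain ⟨xn, hxn, hxnc⟩ := hc n
    have h1 : q xn = q x0 := by
      rw [hxnc, hx0c]
    have h2 : connectedComponent xn = connectedComponent x0 :=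
      ConnectedComponents.coe_eq_coe.mp h1
    have h3 : x0 ∈ connectedComponent xn := h2 ▸ mem_connectedComponent
    exact (hS_clopen n).connectedComponent_subset hxn h3
  have h4 : x0 ∈ Xinf := by
    rw [hXinf, mem_iInter]
    exact fun n => (hx0all n).1
  exact (hx0all 0).2 h4

end Stmt7Aux

theorem stmt_7 {X : Type*} [MetricSpace X] [LocallyCompactSpace X]
    [CompactSpace (ConnectedComponents X)] :
    IsClosed {f : X → X | Isometry f ∧ Surjective f} ∧
    ∀ (fn : ℕ → X → X), (∀ n, Isometry (fn n) ∧ Surjective (fn n)) →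
      ∀ f : X → X, (∀ x, Tendsto (fun n => fn n x) atTop (nhds (f x))) →
        Isometry f ∧ Surjective f := by
  classical
  constructor
  · refine isClosed_of_closure_subset ?_
    intro f hf
    rw [mem_closure_iff_ultrafilter] at hf
    obtain ⟨V, hVS, hVf⟩ := hf
    set F : (X → X) → X → X := fun h => if Isometry h ∧ Surjective h then h else id with hF
    have hiso : ∀ h, Isometry (F h) := by
      intro h
      by_cases H : Isometry h ∧ Surjective h
      · simp only [hF, if_pos H]; exact H.1
      · simp only [hF, if_neg H]; exact isometry_id
    have hsurj : ∀ h, Surjective (F h) := by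
      intro h
      by_cases H : Isometry h ∧ Surjective h
      · simp only [hF, if_pos H]; exact H.2
      · simp only [hF, if_neg H]; exact surjective_id
    have hconv : ∀ x, Tendsto (fun h => F h x) (V : Filter (X → X)) (𝓝 (f x)) := by
      intro x
      have h1 : Tendsto (fun h : X → X => h x) (V : Filter (X → X)) (𝓝 (f x)) :=
        ((continuous_apply x).continuousAt (x := f)).mono_left hVf
      refine Tendsto.congr' ?_ h1
      filter_upwards [hVS] with h hh
      simp only [hF, if_pos hh]
    exact Stmt7Aux.key V F hiso hsurj f hconv
  · intro fn hfn f hf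
    have hne : (atTop : Filter ℕ).NeBot := atTop_neBot
    exact Stmt7Aux.key (Ultrafilter.of atTop) fn (fun n => (hfn n).1) (fun n => (hfn n).2) f
      (fun x => (hf x).mono_left (Ultrafilter.of_le _))
end

section
/- Let (X,d) be a locally compact metric space whose space of connected components Σ(X) is compact. Then the group of isometries I(X,d), equipped with the topology of pointwise convergence, is locally compact. -/
open Function Set Metric Topology

namespace Stmt8Aux

variable {X : Type*} [MetricSpace X]

/-- One chain step: there is a compact closed ball around `x` containing `y` with room. -/
def SRel (x y : X) : Prop := ∃ r : ℝ, IsCompact (closedBall x r) ∧ 2 * dist x y < r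

/-- Symmetrized step relation. -/
def SSym (x y : X) : Prop := SRel x y ∨ SRel y x

/-- Chain reachability. -/
def Reach (x y : X) : Prop := Relation.ReflTransGen SSym x y

lemma image_closedBall {g : X → X} (hg : Isometry g) (hs : Surjective g) (x : X) (r : ℝ) :
    g '' closedBall x r = closedBall (g x) r := by
  ext y
  constructor
  · rintro ⟨u, hu, rfl⟩
    simpa only [mem_closedBall, hg.dist_eq] using hu
  · intro hy
    obtain ⟨u, rfl⟩ := hs y
    exact ⟨u, by simpa only [mem_closedBall, hg.dist_eq] using hy, rfl⟩

lemma srel_map {g : X → X} (hg : Isometry g) (hs : Surjective g) {a b : X} (h : SRel a b) :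
    SRel (g a) (g b) := by
  obtain ⟨r, hr, hd⟩ := h
  refine ⟨r, ?_, by rwa [hg.dist_eq]⟩
  rw [← image_closedBall hg hs]
  exact hr.image hg.continuous

lemma reach_map {g : X → X} (hg : Isometry g) (hs : Surjective g) {a b : X} (h : Reach a b) :
    Reach (g a) (g b) :=
  Relation.ReflTransGen.lift g (fun _ _ hab => Or.imp (srel_map hg hs) (srel_map hg hs) hab) _ _ h

lemma reach_isClopen [LocallyCompactSpace X] (x : X) : IsClopen {y : X | Reach x y} := by
  have key : ∀ y : X, ∃ δ > 0, ∀ z, dist y z < δ → SRel y z := by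
    intro y
    obtain ⟨r, hr0, hrc⟩ := exists_isCompact_closedBall y
    exact ⟨r / 2, by linarith, fun z hz => ⟨r, hrc, by linarith⟩⟩
  constructor
  · rw [← isOpen_compl_iff, Metric.isOpen_iff]
    intro y hy
    obtain ⟨δ, hδ, hs⟩ := key y
    refine ⟨δ, hδ, fun z hz hzmem => hy ?_⟩
    exact hzmem.tail (Or.inr (hs z (by rw [dist_comm]; exact mem_ball.mp hz)))
  · rw [Metric.isOpen_iff]
    intro y hy
    obtain ⟨δ, hδ, hs⟩ := key y
    exact ⟨δ, hδ, fun z hz => hy.tail (Or.inl (hs z (by rw [dist_comm]; exact mem_ball.mp hz)))⟩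

lemma reach_cover [LocallyCompactSpace X] [CompactSpace (ConnectedComponents X)] :
    ∃ F : Finset X, ∀ y : X, ∃ x ∈ F, Reach x y := by
  have hpre : ∀ x : X,
      ConnectedComponents.mk ⁻¹' (ConnectedComponents.mk '' {y : X | Reach x y})
        = {y : X | Reach x y} := by
    intro x
    refine Subset.antisymm ?_ (fun y hy => mem_image_of_mem _ hy)
    rintro y ⟨z, hz, hzy⟩
    have hcc : connectedComponent z = connectedComponent y :=
      ConnectedComponents.coe_eq_coe.mp hzy
    have hsub := (reach_isClopen x).connectedComponent_subset hz
    exact hsub (hcc ▸ mem_connectedComponent)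
  have hopen : ∀ x : X, IsOpen (ConnectedComponents.mk '' {y : X | Reach x y}) := by
    intro x
    rw [← ConnectedComponents.isQuotientMap_coe.isOpen_preimage, hpre x]
    exact (reach_isClopen x).isOpen
  have hcover : (univ : Set (ConnectedComponents X)) ⊆
      ⋃ x : X, ConnectedComponents.mk '' {y : X | Reach x y} := by
    rintro σ -
    obtain ⟨y, rfl⟩ := ConnectedComponents.surjective_coe σ
    exact mem_iUnion.mpr ⟨y, mem_image_of_mem _ Relation.ReflTransGen.refl⟩
  obtain ⟨F, hF⟩ := isCompact_univ.elim_finite_subcover _ hopen hcover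
  refine ⟨F, fun y => ?_⟩
  obtain ⟨x, hxF, hx⟩ := mem_iUnion₂.mp (hF (mem_univ (ConnectedComponents.mk y)))
  have : y ∈ ConnectedComponents.mk ⁻¹' (ConnectedComponents.mk '' {y : X | Reach x y}) := hx
  rw [hpre x] at this
  exact ⟨x, hxF, this⟩

lemma ball_trap {K : Set X} (hK : IsCompact K) {r r' : ℝ} (hrr : r < r')
    (h : ∀ w ∈ K, IsCompact (closedBall w r')) :
    ∃ C : Set X, IsCompact C ∧ ∀ w ∈ K, closedBall w r ⊆ C := by
  obtain ⟨b, hbK, hbfin, hcov⟩ := hK.elim_finite_subcover_image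
    (b := K) (c := fun w => ball w (r' - r)) (fun w _ => isOpen_ball)
    (fun w hw => mem_biUnion hw (mem_ball_self (by linarith)))
  refine ⟨⋃ i ∈ b, closedBall i r', hbfin.isCompact_biUnion (fun i hi => h i (hbK hi)), ?_⟩
  intro w hw
  obtain ⟨i, hib, hwi⟩ := mem_iUnion₂.mp (hcov hw)
  refine subset_trans ?_ (subset_biUnion_of_mem hib)
  intro v hv
  have h1 : dist v w ≤ r := mem_closedBall.mp hv
  have h2 : dist w i < r' - r := mem_ball.mp hwi
  exact mem_closedBall.mpr (le_trans (dist_triangle v w i) (by linarith))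

lemma trap (F : Finset X) (f : X → X) (ε : X → ℝ)
    (hcomp : ∀ x ∈ F, IsCompact (closedBall (f x) (ε x)))
    (hcov : ∀ y : X, ∃ x ∈ F, Reach x y) (y : X) :
    ∃ K : Set X, IsCompact K ∧ ∀ g : X → X, Isometry g → Surjective g →
      (∀ x ∈ F, dist (g x) (f x) ≤ ε x) → g y ∈ K := by
  obtain ⟨x, hxF, hreach⟩ := hcov y
  suffices h : ∀ z : X, Reach x z → IsCompact (closure {w | ∃ g : X → X,
      (Isometry g ∧ Surjective g ∧ ∀ x ∈ F, dist (g x) (f x) ≤ ε x) ∧ g z = w}) by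
    exact ⟨_, h y hreach, fun g hg1 hg2 hg3 => subset_closure ⟨g, ⟨hg1, hg2, hg3⟩, rfl⟩⟩
  intro z hz
  induction hz with
  | refl =>
    refine (hcomp x hxF).of_isClosed_subset isClosed_closure
      (closure_minimal ?_ Metric.isClosed_closedBall)
    rintro w ⟨g, hg, rfl⟩
    exact mem_closedBall.mpr (hg.2.2 x hxF)
  | @tail b c hab hbc ih =>
    have hd0 : (0:ℝ) ≤ dist b c := dist_nonneg
    have hcc : ∃ cc : ℝ, dist b c < cc ∧ ∀ g : X → X,
        (Isometry g ∧ Surjective g ∧ ∀ x ∈ F, dist (g x) (f x) ≤ ε x) →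
          IsCompact (closedBall (g b) cc) := by
      rcases hbc with hS | hS
      · obtain ⟨r, hrc, hrd⟩ := hS
        refine ⟨r, by linarith, fun g hg => ?_⟩
        rw [← image_closedBall hg.1 hg.2.1]
        exact hrc.image hg.1.continuous
      · obtain ⟨r, hrc, hrd⟩ := hS
        have hdcb : dist c b = dist b c := dist_comm c b
        refine ⟨r - dist b c, by linarith [hrd, hdcb.symm ▸ hrd], fun g hg => ?_⟩
        have h1 : IsCompact (closedBall (g c) r) := by
          rw [← image_closedBall hg.1 hg.2.1]
          exact hrc.image hg.1.continuous
        refine h1.of_isClosed_subset Metric.isClosed_closedBall ?_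
        intro v hv
        have h2 : dist v (g b) ≤ r - dist b c := mem_closedBall.mp hv
        have h3 : dist (g b) (g c) = dist b c := hg.1.dist_eq b c
        exact mem_closedBall.mpr (le_trans (dist_triangle v (g b) (g c)) (by linarith))
    obtain ⟨cc, hccd, hccc⟩ := hcc
    have hTball : ∀ w ∈ closure {w | ∃ g : X → X,
        (Isometry g ∧ Surjective g ∧ ∀ x ∈ F, dist (g x) (f x) ≤ ε x) ∧ g b = w},
        IsCompact (closedBall w ((cc + dist b c) / 2)) := by
      intro w hw
      obtain ⟨p, ⟨g, hg, rfl⟩, hpd⟩ := Metric.mem_closure_iff.mp hw ((cc - dist b c) / 2)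
        (by linarith)
      refine (hccc g hg).of_isClosed_subset Metric.isClosed_closedBall ?_
      intro v hv
      have h1 : dist v w ≤ (cc + dist b c) / 2 := mem_closedBall.mp hv
      exact mem_closedBall.mpr (le_trans (dist_triangle v w (g b)) (by linarith))
    obtain ⟨C, hCc, hCsub⟩ := ball_trap ih (show dist b c < (cc + dist b c) / 2 by linarith)
      hTball
    refine hCc.of_isClosed_subset isClosed_closure (closure_minimal ?_ hCc.isClosed)
    rintro w ⟨g, hg, rfl⟩
    have hb : g b ∈ closure {w | ∃ g : X → X,
        (Isometry g ∧ Surjective g ∧ ∀ x ∈ F, dist (g x) (f x) ≤ ε x) ∧ g b = w} :=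
      subset_closure ⟨g, hg, rfl⟩
    refine hCsub _ hb ?_
    exact mem_closedBall.mpr (le_of_eq (hg.1.dist_eq c b ▸ dist_comm c b ▸ rfl))

end Stmt8Aux

theorem stmt_8 {X : Type*} [MetricSpace X] [LocallyCompactSpace X]
    [CompactSpace (ConnectedComponents X)] :
    LocallyCompactSpace {f : X → X // Isometry f ∧ Surjective f} := by
  classical
  haveI : WeaklyLocallyCompactSpace {f : X → X // Isometry f ∧ Surjective f} := by
    constructor
    intro f₀
    obtain ⟨F, hcov⟩ := Stmt8Aux.reach_cover (X := X)
    have hfiso : Isometry f₀.1 := f₀.2.1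
    have hfsurj : Surjective f₀.1 := f₀.2.2
    have hfin : ∀ x : X, ∃ r > 0, IsCompact (closedBall x r) ∧
        IsCompact (closedBall (f₀.1 x) r) := by
      intro x
      obtain ⟨r₁, hr₁, hc₁⟩ := exists_isCompact_closedBall x
      obtain ⟨r₂, hr₂, hc₂⟩ := exists_isCompact_closedBall (f₀.1 x)
      exact ⟨min r₁ r₂, lt_min hr₁ hr₂,
        hc₁.of_isClosed_subset Metric.isClosed_closedBall
          (closedBall_subset_closedBall (min_le_left _ _)),
        hc₂.of_isClosed_subset Metric.isClosed_closedBall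
          (closedBall_subset_closedBall (min_le_right _ _))⟩
    choose ε hε0 hεx hεf using hfin
    set N : Set (X → X) :=
      {g | Isometry g ∧ Surjective g ∧ ∀ x ∈ F, dist (g x) (f₀.1 x) ≤ ε x} with hNdef
    choose T hTc hTmem using fun y => Stmt8Aux.trap F f₀.1 ε (fun x _ => hεf x) hcov y
    have hRclosed : IsClosed ({g : X → X | Isometry g} ∩
        {g : X → X | ∀ x ∈ F, dist (g x) (f₀.1 x) ≤ ε x}) := by
      refine IsClosed.inter ?_ ?_
      · have hiso : {g : X → X | Isometry g} =
            ⋂ (a : X) (b : X), {g : X → X | dist (g a) (g b) = dist a b} := by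
          ext g
          simp only [mem_iInter, mem_setOf_eq]
          exact ⟨fun h a b => h.dist_eq a b, fun h => Isometry.of_dist_eq h⟩
        rw [hiso]
        exact isClosed_iInter fun a => isClosed_iInter fun b =>
          isClosed_eq (Continuous.dist (continuous_apply a) (continuous_apply b))
            continuous_const
      · have hds : {g : X → X | ∀ x ∈ F, dist (g x) (f₀.1 x) ≤ ε x} =
            ⋂ x ∈ (F : Set X), {g : X → X | dist (g x) (f₀.1 x) ≤ ε x} := by
          ext g; simp
        rw [hds]
        exact isClosed_biInter fun x _ =>
          isClosed_le (Continuous.dist (continuous_apply x) continuous_const) continuous_const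
    have hDclosed : IsClosed ((univ : Set X).pi T ∩ ({g : X → X | Isometry g} ∩
        {g : X → X | ∀ x ∈ F, dist (g x) (f₀.1 x) ≤ ε x})) :=
      (isClosed_set_pi fun y _ => (hTc y).isClosed).inter hRclosed
    have hDcomp : IsCompact ((univ : Set X).pi T ∩ ({g : X → X | Isometry g} ∩
        {g : X → X | ∀ x ∈ F, dist (g x) (f₀.1 x) ≤ ε x})) :=
      (isCompact_univ_pi hTc).inter_right hRclosed
    have hsubD : N ⊆ (univ : Set X).pi T ∩ ({g : X → X | Isometry g} ∩
        {g : X → X | ∀ x ∈ F, dist (g x) (f₀.1 x) ≤ ε x}) := by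
      rintro g ⟨hgi, hgs, hgd⟩
      exact ⟨fun y _ => hTmem y g hgi hgs hgd, hgi, hgd⟩
    have hclos : closure N ⊆ N := by
      intro g hg
      obtain ⟨hgpi, hgi, hgd⟩ := closure_minimal hsubD hDclosed hg
      refine ⟨hgi, ?_, hgd⟩
      intro v
      haveI : Nonempty X := ⟨v⟩
      have hfinj : Injective f₀.1 := hfiso.injective
      have hleft : ∀ x : X, Function.invFun f₀.1 (f₀.1 x) = x :=
        fun x => Function.leftInverse_invFun hfinj x
      obtain ⟨K', hK'c, hK'⟩ := Stmt8Aux.trap (F.image f₀.1) (Function.invFun f₀.1)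
        (fun x' => ε (Function.invFun f₀.1 x'))
        (by
          intro x' hx'
          obtain ⟨x, hxF, rfl⟩ := Finset.mem_image.mp hx'
          simp only [hleft]
          exact hεx x)
        (by
          intro y
          obtain ⟨u, rfl⟩ := hfsurj y
          obtain ⟨x, hxF, hr⟩ := hcov u
          exact ⟨f₀.1 x, Finset.mem_image_of_mem f₀.1 hxF,
            Stmt8Aux.reach_map hfiso hfsurj hr⟩)
        v
      set φ : (X → X) → X := fun h => Function.invFun h v with hφ
      have hA : ∀ h ∈ N, h (φ h) = v ∧ φ h ∈ K' := by
        rintro h ⟨hhi, hhs, hhd⟩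
        have hval : h (φ h) = v := Function.invFun_eq (hhs v)
        have hinj : Injective h := hhi.injective
        have hleft' : ∀ a, Function.invFun h (h a) = a :=
          fun a => Function.leftInverse_invFun hinj a
        refine ⟨hval, hK' (Function.invFun h) ?_ (fun a => ⟨h a, hleft' a⟩) ?_⟩
        · refine Isometry.of_dist_eq fun a b => ?_
          have h1 := hhi.dist_eq (Function.invFun h a) (Function.invFun h b)
          rw [Function.invFun_eq (hhs a), Function.invFun_eq (hhs b)] at h1
          exact h1.symm
        · intro x' hx'
          obtain ⟨x, hxF, rfl⟩ := Finset.mem_image.mp hx'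
          rw [hleft]
          have h1 : dist (h (Function.invFun h (f₀.1 x))) (h x)
              = dist (Function.invFun h (f₀.1 x)) x := hhi.dist_eq _ _
          rw [Function.invFun_eq (hhs (f₀.1 x))] at h1
          rw [← h1, dist_comm]
          exact hhd x hxF
      have hL : Filter.NeBot (𝓝 g ⊓ Filter.principal N) := mem_closure_iff_clusterPt.mp hg
      have hmap : Filter.map φ (𝓝 g ⊓ Filter.principal N) ≤ Filter.principal K' := by
        refine le_trans (Filter.map_mono inf_le_right) ?_
        rw [Filter.map_principal]
        refine Filter.principal_mono.mpr ?_
        rintro p ⟨h, hh, rfl⟩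
        exact (hA h hh).2
      haveI hLm : Filter.NeBot (Filter.map φ (𝓝 g ⊓ Filter.principal N)) := hL.map φ
      obtain ⟨u, huK, hcl⟩ := hK'c.exists_clusterPt hmap
      refine ⟨u, ?_⟩
      have hdist : ∀ δ : ℝ, 0 < δ → dist (g u) v ≤ 2 * δ := by
        intro δ hδ
        have hW : (N ∩ {h : X → X | dist (h u) (g u) < δ}) ∈ 𝓝 g ⊓ Filter.principal N := by
          refine Filter.inter_mem (Filter.mem_inf_of_right (Filter.mem_principal_self N)) ?_
          refine Filter.mem_inf_of_left ?_
          refine IsOpen.mem_nhds ?_ ?_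
          · have : {h : X → X | dist (h u) (g u) < δ}
                = (fun h : X → X => h u) ⁻¹' (ball (g u) δ) := by
              ext h; simp [mem_ball]
            rw [this]
            exact isOpen_ball.preimage (continuous_apply u)
          · simp [hδ]
        have hne : (ball u δ ∩ φ '' (N ∩ {h : X → X | dist (h u) (g u) < δ})).Nonempty :=
          clusterPt_iff_nonempty.mp hcl (ball_mem_nhds u hδ) (Filter.image_mem_map hW)
        obtain ⟨p, hpball, h, ⟨hhN, hhu⟩, rfl⟩ := hne
        have h1 : h (φ h) = v := (hA h hhN).1
        have h2 : dist (h u) (h (φ h)) = dist u (φ h) := hhN.1.dist_eq _ _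
        have h3 : dist (φ h) u < δ := mem_ball.mp hpball
        have h4 : dist (h u) (g u) < δ := hhu
        calc dist (g u) v ≤ dist (g u) (h u) + dist (h u) v := dist_triangle _ _ _
          _ = dist (g u) (h u) + dist (h u) (h (φ h)) := by rw [h1]
          _ = dist (g u) (h u) + dist u (φ h) := by rw [h2]
          _ ≤ δ + δ := by
              rw [dist_comm (g u) (h u), dist_comm u (φ h)]
              exact add_le_add h4.le h3.le
          _ = 2 * δ := by ring
      have hle : dist (g u) v ≤ 0 := by
        by_contra hpos
        push_neg at hpos
        have := hdist (dist (g u) v / 3) (by linarith)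
        linarith
      exact eq_of_dist_eq_zero (le_antisymm hle dist_nonneg)
    have hNC : IsCompact N := by
      have hEq : N = closure N := Subset.antisymm subset_closure hclos
      rw [hEq]
      exact hDcomp.of_isClosed_subset isClosed_closure (closure_minimal hsubD hDclosed)
    refine ⟨Subtype.val ⁻¹' N, ?_, ?_⟩
    · rw [Subtype.isCompact_iff]
      have himg : (Subtype.val '' (Subtype.val ⁻¹' N :
          Set {f : X → X // Isometry f ∧ Surjective f}) : Set (X → X)) = N := by
        ext g
        simp only [mem_image, mem_preimage, Subtype.exists, exists_and_right, exists_eq_right]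
        constructor
        · rintro ⟨-, hg⟩
          exact hg
        · intro hg
          exact ⟨⟨hg.1, hg.2.1⟩, hg⟩
      rw [himg]
      exact hNC
    · have hopen : IsOpen {g : {f : X → X // Isometry f ∧ Surjective f} |
          ∀ x ∈ F, dist (g.1 x) (f₀.1 x) < ε x} := by
        have hEq : {g : {f : X → X // Isometry f ∧ Surjective f} |
            ∀ x ∈ F, dist (g.1 x) (f₀.1 x) < ε x}
            = ⋂ x ∈ (F : Set X), {g : {f : X → X // Isometry f ∧ Surjective f} |
                dist (g.1 x) (f₀.1 x) < ε x} := by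
          ext g; simp
        rw [hEq]
        refine isOpen_biInter_finset fun x _ => ?_
        exact isOpen_lt (Continuous.dist
          ((continuous_apply x).comp continuous_subtype_val) continuous_const) continuous_const
      refine Filter.mem_of_superset (hopen.mem_nhds ?_) ?_
      · intro x _
        simpa using hε0 x
      · intro g hg
        exact ⟨g.2.1, g.2.2, fun x hx => (hg x hx).le⟩
  infer_instance
end

section
/- Let (X,d) be a connected locally compact metric space. Then for all x, y ∈ X there exist neighborhoods U of x and V of y such that the set {g ∈ I(X,d) : g(U) ∩ V ≠ ∅} has compact closure in I(X,d); that is, the natural action of I(X,d) on X is proper. -/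
open Function Set Metric Topology Filter

section VDW

variable {X : Type*} [MetricSpace X]

/-- Radius function: sup of radii `r ∈ [0,1]` with compact closed ball. -/
noncomputable def vdwRho (z : X) : ℝ :=
  sSup {r : ℝ | r ∈ Icc (0:ℝ) 1 ∧ IsCompact (closedBall z r)}

lemma vdwRho_set_nonempty (z : X) :
    {r : ℝ | r ∈ Icc (0:ℝ) 1 ∧ IsCompact (closedBall z r)}.Nonempty :=
  ⟨0, ⟨le_refl 0, zero_le_one⟩, by simp⟩

lemma vdwRho_bdd (z : X) :
    BddAbove {r : ℝ | r ∈ Icc (0:ℝ) 1 ∧ IsCompact (closedBall z r)} :=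
  ⟨1, fun _ hr => hr.1.2⟩

lemma vdwRho_nonneg (z : X) : 0 ≤ vdwRho z :=
  le_csSup (vdwRho_bdd z) ⟨⟨le_refl 0, zero_le_one⟩, by simp⟩

lemma vdwRho_le_one (z : X) : vdwRho z ≤ 1 :=
  csSup_le (vdwRho_set_nonempty z) fun _ hr => hr.1.2

lemma vdwRho_pos [LocallyCompactSpace X] (z : X) : 0 < vdwRho z := by
  obtain ⟨r, hr, hc⟩ := exists_isCompact_closedBall z
  have hmem : min r 1 ∈ {r : ℝ | r ∈ Icc (0:ℝ) 1 ∧ IsCompact (closedBall z r)} :=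
    ⟨⟨le_min hr.le zero_le_one, min_le_right _ _⟩,
      hc.of_isClosed_subset isClosed_closedBall (closedBall_subset_closedBall (min_le_left _ _))⟩
  have : min r 1 ≤ vdwRho z := le_csSup (vdwRho_bdd z) hmem
  exact lt_of_lt_of_le (lt_min hr zero_lt_one) this

lemma isCompact_closedBall_of_lt_vdwRho (z : X) {r : ℝ} (_h0 : 0 ≤ r) (h : r < vdwRho z) :
    IsCompact (closedBall z r) := by
  obtain ⟨r', hr', hlt⟩ := exists_lt_of_lt_csSup (vdwRho_set_nonempty z) h
  exact hr'.2.of_isClosed_subset isClosed_closedBall (closedBall_subset_closedBall hlt.le)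

lemma vdwRho_le (z w : X) : vdwRho z ≤ vdwRho w + dist z w := by
  refine csSup_le (vdwRho_set_nonempty z) fun r hr => ?_
  rcases le_or_gt r (dist z w) with h | h
  · have := vdwRho_nonneg w; linarith
  · have hmem : r - dist z w ∈ {s : ℝ | s ∈ Icc (0:ℝ) 1 ∧ IsCompact (closedBall w s)} := by
      refine ⟨⟨by linarith, by have := dist_nonneg (x := z) (y := w); linarith [hr.1.2]⟩, ?_⟩
      refine hr.2.of_isClosed_subset isClosed_closedBall ?_
      intro u hu
      simp only [mem_closedBall] at hu ⊢
      calc dist u z ≤ dist u w + dist w z := dist_triangle u w z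
        _ ≤ (r - dist z w) + dist w z := by linarith
        _ = r := by rw [dist_comm w z]; ring
    have h2 : r - dist z w ≤ vdwRho w := le_csSup (vdwRho_bdd w) hmem
    linarith

lemma vdwRho_map (e : X ≃ᵢ X) (z : X) : vdwRho (e z) = vdwRho z := by
  unfold vdwRho
  congr 1
  ext r
  simp only [Set.mem_setOf_eq, and_congr_right_iff]
  intro _
  rw [← e.image_closedBall, ← IsometryEquiv.coe_toHomeomorph, Homeomorph.isCompact_image]

/-- Surjective isometry as an isometry equiv. -/
noncomputable def vdwIE (g : X → X) (h : Isometry g ∧ Surjective g) : X ≃ᵢ X :=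
  ⟨Equiv.ofBijective g ⟨h.1.injective, h.2⟩, h.1⟩

lemma vdwIE_apply (g : X → X) (h : Isometry g ∧ Surjective g) (z : X) :
    vdwIE g h z = g z := rfl

lemma vdwRho_inv (g : X → X) (h : Isometry g ∧ Surjective g) (z : X) :
    vdwRho (g z) = vdwRho z := by
  have := vdwRho_map (vdwIE g h) z
  rwa [vdwIE_apply] at this

/-- Compact thickening: a compact set `K` has a compact superset containing all points
within `vdwRho k / 3` of each `k ∈ K`. -/
lemma vdw_thick [LocallyCompactSpace X] (K : Set X) (hK : IsCompact K) :
    ∃ K', IsCompact K' ∧ ∀ k ∈ K, ∀ w, dist w k ≤ vdwRho k / 3 → w ∈ K' := by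
  rcases K.eq_empty_or_nonempty with rfl | hne
  · exact ⟨∅, isCompact_empty, by simp⟩
  have hcont : Continuous (vdwRho : X → ℝ) := by
    have : LipschitzWith 1 (vdwRho : X → ℝ) := by
      apply LipschitzWith.of_dist_le_mul
      intro a b
      rw [Real.dist_eq, NNReal.coe_one, one_mul, abs_sub_le_iff]
      constructor
      · have := vdwRho_le a b; linarith
      · have := vdwRho_le b a; rw [dist_comm]; linarith
    exact this.continuous
  obtain ⟨k₀, hk₀K, hk₀⟩ := hK.exists_isMinOn hne hcont.continuousOn
  set δ := vdwRho k₀ with hδ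
  have hδpos : 0 < δ := vdwRho_pos k₀
  obtain ⟨t, htK, hcov⟩ := hK.elim_nhds_subcover (fun k => ball k (δ / 12))
    (fun k _ => ball_mem_nhds k (by linarith))
  refine ⟨⋃ i ∈ t, closedBall i (vdwRho i / 2), ?_, ?_⟩
  · refine t.isCompact_biUnion fun i hi => ?_
    have hipos : 0 < vdwRho i := vdwRho_pos i
    exact isCompact_closedBall_of_lt_vdwRho i (by linarith) (by linarith)
  · intro k hk w hw
    obtain ⟨i, hit, hki⟩ := Set.mem_iUnion₂.mp (hcov hk)
    have hiK : i ∈ K := htK i hit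
    have hδi : δ ≤ vdwRho i := hk₀ hiK
    have hki' : dist k i < δ / 12 := mem_ball.mp hki
    have hrle : vdwRho k ≤ vdwRho i + δ / 12 := by
      have := vdwRho_le k i; linarith [dist_comm k i]
    refine Set.mem_iUnion₂.mpr ⟨i, hit, ?_⟩
    simp only [mem_closedBall]
    calc dist w i ≤ dist w k + dist k i := dist_triangle w k i
      _ ≤ vdwRho k / 3 + δ / 12 := by linarith
      _ ≤ (vdwRho i + δ / 12) / 3 + δ / 12 := by linarith
      _ ≤ vdwRho i / 2 := by linarith

/-- Chains of steps of size `vdwRho/3` starting at `x`. -/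
def vdwChain (x : X) : ℕ → Set X
  | 0 => {x}
  | n + 1 => {z | ∃ w ∈ vdwChain x n, dist z w ≤ vdwRho w / 3}

lemma vdw_chain_cover [LocallyCompactSpace X] [ConnectedSpace X] (x z : X) :
    ∃ n, z ∈ vdwChain x n := by
  set A : Set X := {z | ∃ n, z ∈ vdwChain x n} with hA
  have hopen : IsOpen A := by
    rw [Metric.isOpen_iff]
    rintro z ⟨n, hz⟩
    refine ⟨vdwRho z / 3, by linarith [vdwRho_pos z], fun w hw => ?_⟩
    exact ⟨n + 1, z, hz, (mem_ball.mp hw).le⟩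
  have hclosed : IsClosed A := by
    rw [← closure_subset_iff_isClosed]
    intro z hz
    obtain ⟨w, hwA, hdw⟩ := Metric.mem_closure_iff.mp hz (vdwRho z / 4)
      (by linarith [vdwRho_pos z])
    obtain ⟨n, hwn⟩ := hwA
    refine ⟨n + 1, w, hwn, ?_⟩
    have h1 : vdwRho z ≤ vdwRho w + dist z w := vdwRho_le z w
    linarith
  have hne : A.Nonempty := ⟨x, 0, rfl⟩
  have : A = Set.univ := IsClopen.eq_univ ⟨hclosed, hopen⟩ hne
  have hz : z ∈ A := this ▸ Set.mem_univ z
  exact hz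

/-- Orbit bound: if all `g ∈ S'` are surjective isometries mapping `x` close to `y`,
then the orbit of any `z` under `S'` lies in a compact set. -/
lemma vdw_orbit [LocallyCompactSpace X] [ConnectedSpace X]
    (x y : X) (S' : Set (X → X)) (hS : ∀ g ∈ S', Isometry g ∧ Surjective g)
    (hxy : ∀ g ∈ S', dist (g x) y ≤ vdwRho y / 3) (z : X) :
    ∃ C, IsCompact C ∧ ∀ g ∈ S', g z ∈ C := by
  have key : ∀ n, ∃ C, IsCompact C ∧ ∀ g ∈ S', ∀ w ∈ vdwChain x n, g w ∈ C := by
    intro n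
    induction n with
    | zero =>
      obtain ⟨K', hK', hprop⟩ := vdw_thick {y} isCompact_singleton
      refine ⟨K', hK', fun g hg w hw => ?_⟩
      have : w = x := hw
      subst this
      exact hprop y rfl (g w) (hxy g hg)
    | succ n ih =>
      obtain ⟨C, hC, hmem⟩ := ih
      obtain ⟨K', hK', hprop⟩ := vdw_thick C hC
      refine ⟨K', hK', fun g hg w hw => ?_⟩
      obtain ⟨v, hvn, hdv⟩ := hw
      refine hprop (g v) (hmem g hg v hvn) (g w) ?_
      rw [vdwRho_inv g (hS g hg)]
      calc dist (g w) (g v) = dist w v := (hS g hg).1.dist_eq w v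
        _ ≤ vdwRho v / 3 := hdv
  obtain ⟨n, hn⟩ := vdw_chain_cover x z
  obtain ⟨C, hC, hmem⟩ := key n
  exact ⟨C, hC, fun g hg => hmem g hg z hn⟩

end VDW

theorem stmt_9 {X : Type*} [MetricSpace X] [LocallyCompactSpace X]
    [ConnectedSpace X] (x y : X) :
    ∃ U ∈ nhds x, ∃ V ∈ nhds y,
      IsCompact (closure
        {g : {f : X → X // Isometry f ∧ Surjective f} |
          ∃ z ∈ U, g.1 z ∈ V}) := by
  classical
  set m : ℝ := min (vdwRho x) (vdwRho y) with hm
  have hmpos : 0 < m := lt_min (vdwRho_pos x) (vdwRho_pos y)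
  set rx : ℝ := m / 7 with hrx
  set U : Set X := closedBall x rx with hU
  set V : Set X := closedBall y rx with hV
  have hrxpos : 0 < rx := by positivity
  refine ⟨U, closedBall_mem_nhds x hrxpos, V, closedBall_mem_nhds y hrxpos, ?_⟩
  set S : Set {f : X → X // Isometry f ∧ Surjective f} :=
    {g | ∃ z ∈ U, g.1 z ∈ V} with hS
  set T : Set (X → X) := Subtype.val '' S with hT
  -- all elements of T are surjective isometries
  have hTiso : ∀ g ∈ T, Isometry g ∧ Surjective g := by
    rintro g ⟨⟨g', hg'⟩, _, rfl⟩; exact hg'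
  -- transporter property of elements of T
  have hTtrans : ∀ g ∈ T, ∃ z ∈ U, g z ∈ V := by
    rintro g ⟨⟨g', hg'⟩, hgS, rfl⟩; exact hgS
  -- g x is close to y
  have hTnear : ∀ g ∈ T, dist (g x) y ≤ vdwRho y / 3 := by
    intro g hg
    obtain ⟨z, hzU, hgzV⟩ := hTtrans g hg
    have h1 : dist (g x) (g z) = dist x z := (hTiso g hg).1.dist_eq x z
    have h2 : dist x z ≤ rx := by rw [dist_comm]; exact mem_closedBall.mp hzU
    have h3 : dist (g z) y ≤ rx := mem_closedBall.mp hgzV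
    have hmy : m ≤ vdwRho y := min_le_right _ _
    calc dist (g x) y ≤ dist (g x) (g z) + dist (g z) y := dist_triangle _ _ _
      _ ≤ rx + rx := by rw [h1]; linarith
      _ ≤ vdwRho y / 3 := by rw [hrx]; linarith
  -- the "inverse" map
  set minv : (X → X) → (X → X) := fun g =>
    if h : Isometry g ∧ Surjective g then ⇑(vdwIE g h).symm else id with hminv
  have hminv_eq : ∀ (g : X → X) (h : Isometry g ∧ Surjective g),
      minv g = ⇑(vdwIE g h).symm := by
    intro g h; rw [hminv]; simp only [dif_pos h]
  have hminv_cancel : ∀ (g : X → X) (h : Isometry g ∧ Surjective g) (w : X),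
      g (minv g w) = w := by
    intro g h w
    rw [hminv_eq g h]
    exact (vdwIE g h).apply_symm_apply w
  have hminv_iso : ∀ g ∈ T, Isometry (minv g) ∧ Surjective (minv g) := by
    intro g hg
    rw [hminv_eq g (hTiso g hg)]
    exact ⟨(vdwIE g (hTiso g hg)).symm.isometry, (vdwIE g (hTiso g hg)).symm.surjective⟩
  have hTnear' : ∀ h ∈ minv '' T, dist (h y) x ≤ vdwRho x / 3 := by
    rintro _ ⟨g, hg, rfl⟩
    obtain ⟨z, hzU, hgzV⟩ := hTtrans g hg
    have hiso := (hminv_iso g hg).1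
    have h0 : minv g (g z) = z := by
      rw [hminv_eq g (hTiso g hg)]
      exact (vdwIE g (hTiso g hg)).symm_apply_apply z
    have h1 : dist (minv g y) z = dist (minv g y) (minv g (g z)) := by rw [h0]
    have h2 : dist (minv g y) (minv g (g z)) = dist y (g z) := hiso.dist_eq _ _
    have h3 : dist y (g z) ≤ rx := by rw [dist_comm]; exact mem_closedBall.mp hgzV
    have h4 : dist z x ≤ rx := mem_closedBall.mp hzU
    have hmx : m ≤ vdwRho x := min_le_left _ _
    calc dist (minv g y) x ≤ dist (minv g y) z + dist z x := dist_triangle _ _ _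
      _ ≤ rx + rx := by rw [h1, h2]; linarith
      _ ≤ vdwRho x / 3 := by rw [hrx]; linarith
  -- compact orbit bounds
  have horb : ∀ z : X, ∃ C, IsCompact C ∧ ∀ g ∈ T, g z ∈ C :=
    vdw_orbit x y T hTiso hTnear
  have horb' : ∀ z : X, ∃ C, IsCompact C ∧ ∀ h ∈ minv '' T, h z ∈ C :=
    vdw_orbit y x (minv '' T) (by rintro _ ⟨g, hg, rfl⟩; exact hminv_iso g hg) hTnear'
  choose C hCc hCm using horb
  choose C' hC'c hC'm using horb'
  -- closure of T is compact
  have hTP : T ⊆ Set.pi Set.univ C := fun g hg z _ => hCm z g hg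
  have hPc : IsCompact (Set.pi Set.univ C) := isCompact_univ_pi hCc
  have hPcl : IsClosed (Set.pi Set.univ C) :=
    isClosed_set_pi fun z _ => (hCc z).isClosed
  have hclT : IsCompact (closure T) :=
    hPc.of_isClosed_subset isClosed_closure (closure_minimal hTP hPcl)
  -- every element of closure T is an isometry
  have hcl_iso : ∀ f ∈ closure T, Isometry f := by
    intro f hf
    apply Isometry.of_dist_eq
    intro a b
    have hQ : IsClosed {f : X → X | dist (f a) (f b) = dist a b} :=
      isClosed_eq ((continuous_apply a).dist (continuous_apply b)) continuous_const
    exact closure_minimal (fun g hg => ((hTiso g hg).1).dist_eq a b) hQ hf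
  -- every element of closure T is surjective
  have hcl_surj : ∀ f ∈ closure T, Surjective f := by
    intro f hf
    have hcp : ClusterPt f (𝓟 T) := mem_closure_iff_clusterPt.mp hf
    haveI : (𝓝 f ⊓ 𝓟 T).NeBot := hcp
    set u : Ultrafilter (X → X) := Ultrafilter.of (𝓝 f ⊓ 𝓟 T) with hu
    have hule : ↑u ≤ 𝓝 f ⊓ 𝓟 T := Ultrafilter.of_le _
    have huf : ↑u ≤ 𝓝 f := hule.trans inf_le_left
    have huT : T ∈ u := le_principal_iff.mp (hule.trans inf_le_right)
    -- push forward through minv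
    have hP'c : IsCompact (Set.pi Set.univ C') := isCompact_univ_pi hC'c
    have hmem' : Set.pi Set.univ C' ∈ u.map minv := by
      apply Filter.mem_map.mpr
      filter_upwards [huT] with g hg
      exact fun z _ => hC'm z (minv g) ⟨g, hg, rfl⟩
    obtain ⟨h, _, hvh⟩ := hP'c.ultrafilter_le_nhds (u.map minv)
      (le_principal_iff.mpr hmem')
    intro y'
    refine ⟨h y', ?_⟩
    by_contra hne
    have hdpos : 0 < dist (f (h y')) y' := dist_pos.mpr hne
    set ε := dist (f (h y')) y' with hε
    have h1 : Tendsto (fun g : X → X => g (h y')) ↑u (𝓝 (f (h y'))) :=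
      ((continuous_apply (h y')).tendsto f).mono_left huf
    have h2 : Tendsto (fun g : X → X => minv g y') ↑u (𝓝 (h y')) := by
      have : Tendsto minv ↑u (𝓝 h) := hvh
      exact ((continuous_apply y').tendsto h).comp this
    have hA : {g : X → X | dist (g (h y')) (f (h y')) < ε / 2} ∈ u :=
      h1 (Metric.ball_mem_nhds _ (by linarith))
    have hB : {g : X → X | dist (minv g y') (h y') < ε / 2} ∈ u :=
      h2 (Metric.ball_mem_nhds _ (by linarith))
    have hnon : ({g : X → X | dist (g (h y')) (f (h y')) < ε / 2} ∩
        ({g : X → X | dist (minv g y') (h y') < ε / 2} ∩ T)).Nonempty :=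
      Filter.nonempty_of_mem (Filter.inter_mem hA (Filter.inter_mem hB huT))
    obtain ⟨g, hgA, hgB, hgT⟩ := hnon
    have hgiso := hTiso g hgT
    have key : dist (f (h y')) y' < ε := by
      have e1 : dist (f (h y')) (g (h y')) < ε / 2 := by
        rw [dist_comm]; exact hgA
      have e2 : dist (g (h y')) y' < ε / 2 := by
        have hc : g (minv g y') = y' := hminv_cancel g hgiso y'
        calc dist (g (h y')) y' = dist (g (h y')) (g (minv g y')) := by rw [hc]
          _ = dist (h y') (minv g y') := hgiso.1.dist_eq _ _
          _ = dist (minv g y') (h y') := dist_comm _ _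
          _ < ε / 2 := hgB
      calc dist (f (h y')) y' ≤ dist (f (h y')) (g (h y')) + dist (g (h y')) y' :=
            dist_triangle _ _ _
        _ < ε / 2 + ε / 2 := by linarith
        _ = ε := by ring
    exact lt_irrefl ε key
  -- conclude
  have hrange : closure T ⊆ Set.range (Subtype.val :
      {f : X → X // Isometry f ∧ Surjective f} → X → X) := by
    intro f hf
    exact ⟨⟨f, hcl_iso f hf, hcl_surj f hf⟩, rfl⟩
  have hemb : Topology.IsEmbedding (Subtype.val :
      {f : X → X // Isometry f ∧ Surjective f} → X → X) := Topology.IsEmbedding.subtypeVal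
  rw [hemb.isCompact_iff]
  have : Subtype.val '' closure S = closure T := by
    rw [hemb.closure_eq_preimage_closure_image S, Set.image_preimage_eq_inter_range]
    exact Set.inter_eq_left.mpr hrange
  rw [this]
  exact hclT
end

section
/- Let (X,d) be a connected locally compact metric space. Then for each x ∈ X, the isotropy group {g ∈ I(X,d) : g x = x} is compact in the pointwise convergence topology. -/
/-!
Van Dantzig–van der Waerden. Call a point `y` good if the orbit of `y` under the isotropy group
of `x` is relatively compact. If `closedBall y r` is compact and `y` is good, every orbit point
`g y` carries the compact ball `g '' closedBall y r`; covering the orbit of `y` by finitely many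
of the corresponding `r / 2`-balls shows that every point within `r / 2` of `y` is good. Hence
goodness is locally constant, and since `x` is good, every point is good by connectedness.
The isotropy group then sits in the Tychonoff product of the orbit closures, and it is closed
there: a pointwise limit of isometries fixing `x` is an isometry fixing `x` that maps each
compact orbit closure into itself, hence onto itself.
-/

open Function Set Metric Topology

section Isometry

variable {X Y : Type*}

theorem Isometry.iterate [PseudoEMetricSpace X] {f : X → X} (hf : Isometry f) (n : ℕ) :
    Isometry f^[n] := by
  induction n with
  | zero => exact isometry_id
  | succ n ih => rw [iterate_succ]; exact ih.comp hf

theorem isClosed_setOf_isometry [PseudoEMetricSpace X] [PseudoEMetricSpace Y] :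
    IsClosed {f : X → Y | Isometry f} := by
  simp only [Isometry, ofPred_forall]
  exact isClosed_iInter fun a => isClosed_iInter fun b =>
    isClosed_eq ((continuous_apply a).edist (continuous_apply b)) continuous_const

theorem Isometry.image_closedBall [PseudoMetricSpace X] [PseudoMetricSpace Y] {f : X → Y}
    (hf : Isometry f) (hs : Surjective f) (y : X) (r : ℝ) :
    f '' closedBall y r = closedBall (f y) r := by
  rw [← hf.preimage_closedBall, image_preimage_eq _ hs]

/-- The orbit of a point outside the range stays `ε`-separated, contradicting compactness. -/
theorem Isometry.surjective_of_compactSpace [MetricSpace X] [CompactSpace X] {f : X → X}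
    (hf : Isometry f) : Surjective f := by
  intro z
  by_contra! hz
  obtain ⟨ε, hε, hball⟩ := Metric.isOpen_iff.1
    (isCompact_range hf.continuous).isClosed.isOpen_compl z (by simpa using hz)
  have hsep : ∀ m k, ε ≤ dist (f^[m] z) (f^[m + (k + 1)] z) := by
    intro m k
    rw [iterate_add_apply, (hf.iterate m).dist_eq]
    by_contra! hlt
    exact hball (mem_ball.2 (by rwa [dist_comm])) ⟨f^[k] z, (iterate_succ_apply' f k z).symm⟩
  obtain ⟨_, φ, hφ, hlim⟩ := CompactSpace.tendsto_subseq fun n => f^[n] z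
  obtain ⟨N, hN⟩ := Metric.cauchySeq_iff'.1 hlim.cauchySeq ε hε
  obtain ⟨k, hk⟩ := Nat.exists_eq_add_of_lt (hφ (Nat.lt_succ_self N))
  have hclose := hN (N + 1) N.le_succ
  simp only [comp_apply, hk, add_assoc, dist_comm] at hclose
  exact (hsep (φ N) k).not_gt hclose

end Isometry

section Isotropy

variable {X : Type*} [MetricSpace X]

def isotropy (x : X) : Set (X → X) :=
  {g | Isometry g ∧ Surjective g ∧ g x = x}

def isotropyOrbit (x y : X) : Set X :=
  (fun g : X → X => g y) '' isotropy x

lemma id_mem_isotropy (x : X) : id ∈ isotropy x :=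
  ⟨isometry_id, surjective_id, rfl⟩

lemma comp_mem_isotropy {x : X} {f g : X → X} (hf : f ∈ isotropy x) (hg : g ∈ isotropy x) :
    f ∘ g ∈ isotropy x :=
  ⟨hf.1.comp hg.1, hf.2.1.comp hg.2.1, by simp only [comp_apply, hg.2.2, hf.2.2]⟩

lemma mem_isotropyOrbit_self (x y : X) : y ∈ isotropyOrbit x y :=
  ⟨id, id_mem_isotropy x, rfl⟩

lemma isotropyOrbit_self (x : X) : isotropyOrbit x x = {x} :=
  Subset.antisymm (by rintro _ ⟨g, hg, rfl⟩; exact hg.2.2)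
    (singleton_subset_iff.2 (mem_isotropyOrbit_self x x))

lemma isotropyOrbit_apply_subset {x : X} {g : X → X} (hg : g ∈ isotropy x) (y : X) :
    isotropyOrbit x (g y) ⊆ isotropyOrbit x y := by
  rintro _ ⟨f, hf, rfl⟩
  exact ⟨f ∘ g, comp_mem_isotropy hf hg, rfl⟩

lemma isCompact_closure_isotropyOrbit_of_dist_lt {x y z : X} {r : ℝ}
    (hr : IsCompact (closedBall y r)) (hy : IsCompact (closure (isotropyOrbit x y)))
    (hz : dist z y < r / 2) : IsCompact (closure (isotropyOrbit x z)) := by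
  obtain ⟨t, hto, htf, hcover⟩ := finite_approx_of_totallyBounded
    (hy.totallyBounded.subset subset_closure) (r / 2) (dist_nonneg.trans_lt hz)
  have hcompact : IsCompact (⋃ p ∈ t, closedBall p r) := by
    refine htf.isCompact_biUnion fun p hp => ?_
    obtain ⟨g, hg, rfl⟩ := hto hp
    rw [← hg.1.image_closedBall hg.2.1]
    exact hr.image hg.1.continuous
  refine hcompact.of_isClosed_subset isClosed_closure (closure_minimal ?_ hcompact.isClosed)
  rintro _ ⟨g, hg, rfl⟩
  obtain ⟨p, hp, hgp⟩ := mem_iUnion₂.1 (hcover ⟨g, hg, rfl⟩)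
  refine mem_iUnion₂.2 ⟨p, hp, ?_⟩
  calc dist (g z) p ≤ dist (g z) (g y) + dist (g y) p := dist_triangle _ _ _
    _ ≤ r := by rw [hg.1.dist_eq]; linarith [mem_ball.1 hgp]

lemma isLocallyConstant_isCompact_closure_isotropyOrbit [WeaklyLocallyCompactSpace X] (x : X) :
    IsLocallyConstant fun y => IsCompact (closure (isotropyOrbit x y)) := by
  refine (IsLocallyConstant.iff_eventually_eq _).2 fun y => ?_
  obtain ⟨r, hr0, hr⟩ := exists_isCompact_closedBall y
  filter_upwards [ball_mem_nhds y (by positivity : 0 < r / 4)] with z hz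
  have hzy := mem_ball.1 hz
  have hzr : IsCompact (closedBall z (r / 2)) :=
    hr.of_isClosed_subset isClosed_closedBall (closedBall_subset_closedBall' (by linarith))
  exact propext ⟨fun h => isCompact_closure_isotropyOrbit_of_dist_lt hzr h
      (by rw [dist_comm]; linarith),
    fun h => isCompact_closure_isotropyOrbit_of_dist_lt hr h (by linarith)⟩

lemma isCompact_closure_isotropyOrbit [WeaklyLocallyCompactSpace X] [PreconnectedSpace X]
    (x y : X) : IsCompact (closure (isotropyOrbit x y)) := by
  have h := (isLocallyConstant_isCompact_closure_isotropyOrbit x).apply_eq_of_preconnectedSpace y x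
  simpa only [isotropyOrbit_self, closure_singleton, isCompact_singleton, eq_iff_iff,
    iff_true] using h

lemma apply_mem_closure_isotropyOrbit {x : X} {f : X → X} (hf : f ∈ closure (isotropy x))
    (y : X) : f y ∈ closure (isotropyOrbit x y) :=
  (mapsTo_image _ _).closure (continuous_apply y) hf

lemma mapsTo_closure_isotropyOrbit {x : X} {f : X → X} (hf : f ∈ closure (isotropy x))
    (hfc : Continuous f) (y : X) :
    MapsTo f (closure (isotropyOrbit x y)) (closure (isotropyOrbit x y)) := by
  have h : MapsTo f (isotropyOrbit x y) (closure (isotropyOrbit x y)) := by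
    rintro _ ⟨g, hg, rfl⟩
    exact closure_mono (isotropyOrbit_apply_subset hg y) (apply_mem_closure_isotropyOrbit hf (g y))
  simpa only [closure_closure] using h.closure hfc

lemma isClosed_isotropy {x : X} (h : ∀ y, IsCompact (closure (isotropyOrbit x y))) :
    IsClosed (isotropy x) := by
  refine isClosed_of_closure_subset fun f hf => ?_
  have hfi : Isometry f := closure_minimal (fun g hg => hg.1) isClosed_setOf_isometry hf
  have hfx : f x = x := by
    simpa only [isotropyOrbit_self, closure_singleton, mem_singleton_iff] using
      apply_mem_closure_isotropyOrbit hf x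
  refine ⟨hfi, fun y => ?_, hfx⟩
  have hC := mapsTo_closure_isotropyOrbit hf hfi.continuous y
  have := isCompact_iff_compactSpace.1 (h y)
  have hres : Isometry (hC.restrict f _ _) := fun a b => hfi a b
  obtain ⟨w, hw⟩ :=
    hres.surjective_of_compactSpace ⟨y, subset_closure (mem_isotropyOrbit_self x y)⟩
  exact ⟨w, congrArg Subtype.val hw⟩

end Isotropy

theorem stmt_10 {X : Type*} [MetricSpace X] [LocallyCompactSpace X]
    [ConnectedSpace X] (x : X) :
    IsCompact {g : {f : X → X // Isometry f ∧ Surjective f} | g.1 x = x} := by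
  have horbit := isCompact_closure_isotropyOrbit x
  have hval : Subtype.val '' {g : {f : X → X // Isometry f ∧ Surjective f} | g.1 x = x} =
      isotropy x := by
    ext f
    constructor
    · rintro ⟨⟨f, hf⟩, hfx, rfl⟩
      exact ⟨hf.1, hf.2, hfx⟩
    · rintro ⟨hfi, hfs, hfx⟩
      exact ⟨⟨f, hfi, hfs⟩, hfx, rfl⟩
  rw [Subtype.isCompact_iff, hval]
  exact (isCompact_univ_pi horbit).of_isClosed_subset (isClosed_isotropy horbit)
    fun g hg y _ => subset_closure ⟨g, hg, rfl⟩
end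

section
/- Let (X,d) be a connected locally compact metric space, x, y ∈ X, and ε > 0 such that the closed ball of radius 2ε around y is compact. Then the set F = {g ∈ I(X,d) : d(g x, y) ≤ 2ε} has the property that {g x' : g ∈ F} is relatively compact for every x' ∈ X. -/
/-! Relative compactness of the orbit `{g p : g ∈ F}` is a locally constant property of `p`,
hence holds everywhere since `X` is connected and it holds at `x`: the orbit of `x` lies in the
compact ball `closedBall y (2 * ε)`. Local constancy is a uniform version of local compactness
along an orbit: a surjective isometry carries a compact ball around `p` onto a compact ball of the
same radius around `g p`, and a relatively compact set all of whose points have compact `r`-balls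
has compact `δ`-thickenings for `δ < r`; the orbit of a point at distance `δ` from `p` lies in the
`δ`-thickening of the orbit of `p`. -/

open Function Set Metric Topology

section

variable {X Y : Type*} [PseudoMetricSpace X] [PseudoMetricSpace Y]

theorem Isometry.image_closedBall_of_surjective {f : X → Y} (hf : Isometry f) (hs : Surjective f)
    (x : X) (r : ℝ) : f '' closedBall x r = closedBall (f x) r := by
  rw [← hf.preimage_closedBall, hs.image_preimage]

theorem IsCompact.closedBall_isometry_image {f : X → Y} (hf : Isometry f) (hs : Surjective f)
    {x : X} {r : ℝ} (h : IsCompact (closedBall x r)) : IsCompact (closedBall (f x) r) :=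
  hf.image_closedBall_of_surjective hs x r ▸ h.image hf.continuous

theorem isCompact_cthickening_of_forall_isCompact_closedBall {S : Set X} {r δ : ℝ}
    (hS : IsCompact (closure S)) (hr : ∀ s ∈ S, IsCompact (closedBall s r)) (hδ₀ : 0 ≤ δ)
    (hδr : δ < r) : IsCompact (cthickening δ S) := by
  obtain ⟨η, hη, rfl⟩ : ∃ η, 0 < η ∧ r = δ + 2 * η := ⟨(r - δ) / 2, by linarith, by ring⟩
  have hcover : closure S ⊆ ⋃ s ∈ S, ball s η := by
    rw [← thickening_eq_biUnion_ball]
    exact closure_subset_thickening hη S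
  obtain ⟨t, htS, ht, hcover⟩ :=
    hS.elim_finite_subcover_image (fun s _ => isOpen_ball) hcover
  refine (ht.isCompact_biUnion fun s hs => hr s (htS hs)).of_isClosed_subset
    isClosed_cthickening fun z hz => ?_
  obtain ⟨s, hs, hzs⟩ := mem_iUnion₂.1
    (cthickening_subset_iUnion_closedBall_of_lt S (by positivity) (lt_add_of_pos_right δ hη) hz)
  obtain ⟨u, hu, hsu⟩ := mem_iUnion₂.1 (hcover (subset_closure hs))
  refine mem_iUnion₂.2 ⟨u, hu, ?_⟩
  rw [mem_closedBall] at hzs ⊢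
  rw [mem_ball] at hsu
  linarith [dist_triangle z s u]

variable {F : Set (X → X)}

theorem isCompact_closure_orbit_of_dist_lt (hF : ∀ g ∈ F, Isometry g ∧ Surjective g)
    {p q : X} {r : ℝ} (hr : IsCompact (closedBall p r)) (hpq : dist p q < r / 2)
    (hq : IsCompact (closure ((fun g => g q) '' F))) :
    IsCompact (closure ((fun g => g p) '' F)) := by
  have hballs : ∀ z ∈ (fun g => g q) '' F, IsCompact (closedBall z (r - dist p q)) := by
    rintro _ ⟨g, hg, rfl⟩
    obtain ⟨hgi, hgs⟩ := hF g hg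
    refine (hr.closedBall_isometry_image hgi hgs).of_isClosed_subset isClosed_closedBall
      (closedBall_subset_closedBall' ?_)
    rw [hgi.dist_eq q p, dist_comm]
    linarith
  have hK := isCompact_cthickening_of_forall_isCompact_closedBall hq hballs dist_nonneg
    (by linarith)
  refine hK.of_isClosed_subset isClosed_closure (closure_minimal ?_ isClosed_cthickening)
  rintro _ ⟨g, hg, rfl⟩
  exact mem_cthickening_of_dist_le _ (g q) _ _ ⟨g, hg, rfl⟩ ((hF g hg).1.dist_eq p q).le

theorem isLocallyConstant_isCompact_closure_orbit [WeaklyLocallyCompactSpace X]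
    (hF : ∀ g ∈ F, Isometry g ∧ Surjective g) :
    IsLocallyConstant fun p => IsCompact (closure ((fun g => g p) '' F)) := by
  refine (IsLocallyConstant.iff_eventually_eq _).2 fun p => ?_
  obtain ⟨r, hr₀, hr⟩ := exists_isCompact_closedBall p
  filter_upwards [ball_mem_nhds p (by positivity : 0 < r / 4)] with q hq
  rw [mem_ball] at hq
  have hrq : IsCompact (closedBall q (r / 2)) :=
    hr.of_isClosed_subset isClosed_closedBall (closedBall_subset_closedBall' (by linarith))
  exact propext ⟨isCompact_closure_orbit_of_dist_lt hF hr (by rw [dist_comm]; linarith),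
    isCompact_closure_orbit_of_dist_lt hF hrq (by linarith)⟩

end

theorem stmt_11_general {X : Type*} [MetricSpace X] [LocallyCompactSpace X]
    [ConnectedSpace X] (x y : X) (ε : ℝ)
    (hball : IsCompact (Metric.closedBall y (2 * ε))) :
    ∀ x' : X, IsCompact (closure
      ((fun g => g x') ''
        {g : X → X | (Isometry g ∧ Surjective g) ∧ dist (g x) y ≤ 2 * ε})) := by
  intro x'
  set F := {g : X → X | (Isometry g ∧ Surjective g) ∧ dist (g x) y ≤ 2 * ε}
  have hx : IsCompact (closure ((fun g => g x) '' F)) :=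
    hball.of_isClosed_subset isClosed_closure
      (closure_minimal (by rintro _ ⟨g, hg, rfl⟩; exact hg.2) isClosed_closedBall)
  have hF : ∀ g ∈ F, Isometry g ∧ Surjective g := fun g hg => hg.1
  exact (isLocallyConstant_isCompact_closure_orbit hF).apply_eq_of_preconnectedSpace x x' ▸ hx

theorem stmt_11 {X : Type*} [MetricSpace X] [LocallyCompactSpace X]
    [ConnectedSpace X] (x y : X) (ε : ℝ) (hε : 0 < ε)
    (hball : IsCompact (Metric.closedBall y (2 * ε))) :
    ∀ x' : X, IsCompact (closure
      ((fun g => g x') ''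
        {g : X → X | (Isometry g ∧ Surjective g) ∧ dist (g x) y ≤ 2 * ε})) :=
  stmt_11_general x y ε hball
end

section
/- Let X = {(0,y) : y ∈ ℝ} ∪ {(1,0)} ⊆ ℝ² with metric d = min{1, δ} where δ is the Euclidean metric. Then the isotropy group of the point (1,0) in I(X,d) is not compact in the pointwise convergence topology, since it contains all vertical translations (0,y) ↦ (0,y+t); hence the action of I(X,d) on X is not proper. -/
open Function Set

/-- The space `X`: the y-axis together with the point `(1,0)`. -/
def X15 : Type := {p : ℝ × ℝ // p.1 = 0 ∨ p = (1, 0)}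

instance : TopologicalSpace X15 := instTopologicalSpaceSubtype

/-- The truncated metric `d = min {1, δ}`. -/
noncomputable def dmin (p q : X15) : ℝ := min 1 (dist p.1 q.1)

/-- The isolated point `(1,0)` of `X15`. -/
def pt : X15 := ⟨(1, 0), Or.inr rfl⟩

/-- Vertical translation by `t` on the y-axis, fixing `(1,0)`. -/
noncomputable def vtr (t : ℝ) (p : X15) : X15 :=
  if h : p.1.1 = 0 then ⟨(0, p.1.2 + t), Or.inl rfl⟩ else pt

lemma vtr_axis (t : ℝ) (p : X15) (h : p.1.1 = 0) :
    vtr t p = ⟨(0, p.1.2 + t), Or.inl rfl⟩ := dif_pos h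

lemma vtr_pt (t : ℝ) : vtr t pt = pt := dif_neg one_ne_zero

lemma eq_pt_of_ne (p : X15) (h : p.1.1 ≠ 0) : p = pt := by
  rcases p.2 with h0 | h0
  · exact absurd (by rw [h0]) h
  · exact Subtype.ext h0

lemma dmin_axis_pt (p : X15) (h : p.1.1 = 0) : dmin p pt = 1 := by
  have h1 : (1 : ℝ) ≤ dist p.1 pt.1 := by
    have := le_max_left (dist p.1.1 pt.1.1) (dist p.1.2 pt.1.2)
    rw [← Prod.dist_eq] at this
    have h2 : dist p.1.1 pt.1.1 = 1 := by
      simp [pt, h, Real.dist_eq]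
    linarith
  simp [dmin, min_eq_left h1]

lemma dmin_comm (p q : X15) : dmin p q = dmin q p := by
  simp [dmin, dist_comm]

theorem stmt_15 :
    (∀ t : ℝ, vtr t ∈
      {g : X15 → X15 | (Surjective g ∧ ∀ p q, dmin (g p) (g q) = dmin p q) ∧ g pt = pt}) ∧
    ¬ IsCompact
      {g : X15 → X15 | (Surjective g ∧ ∀ p q, dmin (g p) (g q) = dmin p q) ∧ g pt = pt} := by
  have hmem : ∀ t : ℝ, (Surjective (vtr t) ∧ ∀ p q, dmin (vtr t p) (vtr t q) = dmin p q)
      ∧ vtr t pt = pt := by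
    intro t
    refine ⟨⟨?_, ?_⟩, vtr_pt t⟩
    · intro q
      by_cases hq : q.1.1 = 0
      · refine ⟨⟨(0, q.1.2 - t), Or.inl rfl⟩, ?_⟩
        rw [vtr_axis t (⟨(0, q.1.2 - t), Or.inl rfl⟩ : X15) rfl]
        apply Subtype.ext
        apply Prod.ext
        · exact hq.symm
        · ring
      · exact ⟨pt, by rw [eq_pt_of_ne q hq, vtr_pt]⟩
    · intro p q
      by_cases hp : p.1.1 = 0 <;> by_cases hq : q.1.1 = 0
      · rw [vtr_axis t p hp, vtr_axis t q hq]
        have hp' : p.1 = (0, p.1.2) := Prod.ext hp rfl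
        have hq' : q.1 = (0, q.1.2) := Prod.ext hq rfl
        unfold dmin
        rw [hp', hq']
        simp [Prod.dist_eq, Real.dist_eq]
      · rw [eq_pt_of_ne q hq, vtr_pt]
        rw [dmin_axis_pt p hp, dmin_axis_pt _ (by rw [vtr_axis t p hp])]
      · rw [eq_pt_of_ne p hp, vtr_pt]
        rw [dmin_comm, dmin_comm pt q, dmin_axis_pt q hq,
          dmin_axis_pt _ (by rw [vtr_axis t q hq])]
      · rw [eq_pt_of_ne p hp, eq_pt_of_ne q hq, vtr_pt]
  refine ⟨hmem, ?_⟩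
  intro hK
  set p0 : X15 := ⟨(0, 0), Or.inl rfl⟩ with hp0
  have hf : Continuous fun g : X15 → X15 => (g p0).1.2 :=
    continuous_snd.comp (continuous_subtype_val.comp (continuous_apply p0))
  have himg := hK.image hf
  have huniv : (fun g : X15 → X15 => (g p0).1.2) ''
      {g : X15 → X15 | (Surjective g ∧ ∀ p q, dmin (g p) (g q) = dmin p q) ∧ g pt = pt}
      = univ := by
    apply eq_univ_of_forall
    intro t
    refine ⟨vtr t, hmem t, ?_⟩
    show ((vtr t) p0).1.2 = t
    rw [vtr_axis t p0 rfl]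
    simp
    rfl
  rw [huniv] at himg
  exact himg.ne_univ rfl
end

section
/- Let X be a locally compact metric space whose space of connected components Σ(X) is compact. Then X is separable, hence second countable. -/
open Function Set Topology

open Metric TopologicalSpace in
/-- Countable unions of separable sets indexed by a countable set are separable. -/
theorem aux_isSeparable_biUnion {α ι : Type*} [TopologicalSpace α] {s : Set ι}
    (hs : s.Countable) {t : ι → Set α} (h : ∀ i ∈ s, IsSeparable (t i)) :
    IsSeparable (⋃ i ∈ s, t i) := by
  haveI := hs.to_subtype
  rw [Set.biUnion_eq_iUnion]
  exact IsSeparable.iUnion fun i => h i i.2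

open Metric TopologicalSpace in
/-- The union of all open balls around `w` whose corresponding closed ball is compact
is separable. -/
theorem aux_B_separable {X : Type*} [MetricSpace X] (w : X) :
    IsSeparable (⋃ s ∈ {s : ℝ | IsCompact (closedBall w s)}, ball w s) := by
  have hsub : (⋃ s ∈ {s : ℝ | IsCompact (closedBall w s)}, ball w s) ⊆
      ⋃ q : ℚ, {y | IsCompact (closedBall w (q : ℝ)) ∧ y ∈ closedBall w (q : ℝ)} := by
    rintro y hy
    simp only [mem_iUnion, mem_setOf_eq] at hy ⊢
    obtain ⟨s, hs, hys⟩ := hy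
    have hlt : dist y w < s := hys
    obtain ⟨q, hq1, hq2⟩ := exists_rat_btwn hlt
    refine ⟨q, ?_, mem_closedBall.2 hq1.le⟩
    exact hs.of_isClosed_subset Metric.isClosed_closedBall (closedBall_subset_closedBall hq2.le)
  refine IsSeparable.mono (IsSeparable.iUnion fun q : ℚ => ?_) hsub
  by_cases h : IsCompact (closedBall w (q : ℝ))
  · exact h.isSeparable.mono fun y hy => hy.2
  · exact finite_empty.isSeparable.mono fun y hy => (h hy.1).elim

open Metric TopologicalSpace in
theorem aux_separableSpace {X : Type*} [MetricSpace X] [LocallyCompactSpace X]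
    [CompactSpace (ConnectedComponents X)] : SeparableSpace X := by
  classical
  -- choose radii with compact closed balls
  have hball : ∀ x : X, ∃ r > 0, IsCompact (closedBall x r) := fun x =>
    exists_isCompact_closedBall x
  choose r hr hcr using hball
  -- the step relation
  set Rel : X → X → Prop := fun y z => dist z y < r y / 2 ∨ dist z y < r z / 2 with hRel
  set T : X → Set X := fun x => {y | Relation.ReflTransGen Rel x y} with hT
  have hxT : ∀ x, x ∈ T x := fun x => Relation.ReflTransGen.refl
  -- T x is open
  have hTopen : ∀ x, IsOpen (T x) := by
    intro x
    rw [Metric.isOpen_iff]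
    intro y hy
    refine ⟨r y / 2, half_pos (hr y), fun z hz => ?_⟩
    exact hy.tail (Or.inl (mem_ball.1 hz))
  -- T x is closed
  have hTclosed : ∀ x, IsClosed (T x) := by
    intro x
    rw [← closure_subset_iff_isClosed]
    intro y hy
    obtain ⟨z, hz, hdz⟩ := Metric.mem_closure_iff.1 hy (r y / 2) (half_pos (hr y))
    exact hz.tail (Or.inr hdz)
  -- the B sets
  set B : X → Set X := fun w => ⋃ s ∈ {s : ℝ | IsCompact (closedBall w s)}, ball w s with hB
  have hBsep : ∀ w, IsSeparable (B w) := aux_B_separable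
  -- one-step absorption
  have hstep : ∀ S : Set X, IsSeparable S →
      IsSeparable (S ∪ {y | ∃ z ∈ S, Rel z y}) := by
    intro S hS
    obtain ⟨D, hDc, hDsub⟩ := id hS
    have key : {y | ∃ z ∈ S, Rel z y} ⊆ ⋃ z' ∈ D, B z' := by
      rintro y ⟨z, hzS, hrel⟩
      have hzcl : z ∈ closure D := hDsub hzS
      rcases hrel with h | h
      · -- dist y z < r z / 2
        obtain ⟨z', hz'D, hdzz'⟩ := Metric.mem_closure_iff.1 hzcl (r z / 4)
          (by linarith [hr z])
        refine mem_biUnion hz'D ?_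
        have hyz' : dist y z' < 3 * r z / 4 := by
          have := dist_triangle y z z'
          linarith
        have hsub : closedBall z' (3 * r z / 4) ⊆ closedBall z (r z) := by
          intro w hw
          simp only [mem_closedBall] at hw ⊢
          have h1 := dist_triangle w z' z
          have h2 : dist z' z ≤ r z / 4 := by rw [dist_comm]; exact hdzz'.le
          linarith
        have hcomp : IsCompact (closedBall z' (3 * r z / 4)) :=
          (hcr z).of_isClosed_subset Metric.isClosed_closedBall hsub
        exact mem_biUnion hcomp (mem_ball.2 hyz')
      · -- dist y z < r y / 2
        obtain ⟨z', hz'D, hdzz'⟩ := Metric.mem_closure_iff.1 hzcl (r y / 2 - dist y z)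
          (by linarith)
        refine mem_biUnion hz'D ?_
        have hyz' : dist y z' < r y / 2 := by
          have := dist_triangle y z z'
          linarith
        have hsub : closedBall z' (r y / 2) ⊆ closedBall y (r y) := by
          intro w hw
          simp only [mem_closedBall] at hw ⊢
          have h1 := dist_triangle w z' y
          have h2 : dist z' y ≤ r y / 2 := by rw [dist_comm]; exact hyz'.le
          linarith
        have hcomp : IsCompact (closedBall z' (r y / 2)) :=
          (hcr y).of_isClosed_subset Metric.isClosed_closedBall hsub
        exact mem_biUnion hcomp (mem_ball.2 hyz')
    have hU : IsSeparable (⋃ z' ∈ D, B z') :=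
      aux_isSeparable_biUnion hDc fun z' _ => hBsep z'
    exact hS.union (hU.mono key)
  -- T x is separable
  have hTsep : ∀ x, IsSeparable (T x) := by
    intro x
    set g : ℕ → Set X := fun n => Nat.rec ({x} : Set X)
      (fun _ S => S ∪ {y | ∃ z ∈ S, Rel z y}) n with hg
    have hgsep : ∀ n, IsSeparable (g n) := by
      intro n
      induction n with
      | zero => exact (finite_singleton x).isSeparable
      | succ n ih => exact hstep (g n) ih
    have hsub : T x ⊆ ⋃ n, g n := by
      intro y hy
      induction hy with
      | refl => exact mem_iUnion.2 ⟨0, rfl⟩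
      | tail _ hbc ih =>
        obtain ⟨n, hn⟩ := mem_iUnion.1 ih
        exact mem_iUnion.2 ⟨n + 1, Or.inr ⟨_, hn, hbc⟩⟩
    exact (IsSeparable.iUnion hgsep).mono hsub
  -- T x is saturated for connected components
  have hTsat : ∀ x y z, y ∈ T x → z ∈ connectedComponent y → z ∈ T x := by
    intro x y z hy hz
    exact (IsClopen.connectedComponent_subset ⟨hTclosed x, hTopen x⟩ hy) hz
  -- images in the component space
  have hqsat : ∀ x, (ConnectedComponents.mk : X → ConnectedComponents X) ⁻¹'
      ((ConnectedComponents.mk : X → ConnectedComponents X) '' T x) = T x := by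
    intro x
    apply Subset.antisymm
    · rintro y ⟨z, hz, hzy⟩
      exact hTsat x z y hz (ConnectedComponents.coe_eq_coe'.1 hzy.symm)
    · exact subset_preimage_image _ (T x)
  have hqopen : ∀ x, IsOpen ((ConnectedComponents.mk : X → ConnectedComponents X) '' T x) := by
    intro x
    rw [← ConnectedComponents.isQuotientMap_coe.isOpen_preimage, hqsat]
    exact hTopen x
  -- compactness: finite subcover
  have hcover : (univ : Set (ConnectedComponents X)) ⊆
      ⋃ x : X, (ConnectedComponents.mk : X → ConnectedComponents X) '' T x := by
    rintro c -
    obtain ⟨x, rfl⟩ := ConnectedComponents.surjective_coe c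
    exact mem_iUnion.2 ⟨x, mem_image_of_mem _ (hxT x)⟩
  obtain ⟨F, hF⟩ := isCompact_univ.elim_finite_subcover
    (fun x : X => (ConnectedComponents.mk : X → ConnectedComponents X) '' T x)
    (fun x => hqopen x) hcover
  have hXcover : (univ : Set X) ⊆ ⋃ x ∈ (F : Set X), T x := by
    rintro y -
    have hy : (ConnectedComponents.mk y : ConnectedComponents X) ∈
        ⋃ x ∈ F, (ConnectedComponents.mk : X → ConnectedComponents X) '' T x :=
      hF (mem_univ _)
    obtain ⟨x, hxF, hyx⟩ := mem_iUnion₂.1 hy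
    refine mem_iUnion₂.2 ⟨x, hxF, ?_⟩
    rw [← hqsat x]
    exact hyx
  have hsep : IsSeparable (univ : Set X) :=
    (aux_isSeparable_biUnion F.countable_toSet fun x _ => hTsep x).mono hXcover
  exact isSeparable_univ_iff.1 hsep

theorem stmt_17 {X : Type*} [MetricSpace X] [LocallyCompactSpace X]
    [CompactSpace (ConnectedComponents X)] :
    TopologicalSpace.SeparableSpace X ∧ SecondCountableTopology X := by
  have h := aux_separableSpace (X := X)
  exact ⟨h, UniformSpace.secondCountable_of_separable X⟩
end
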